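/- arXiv:math/0111042 — 11 statements merged into one kernel-verified Lean document; each statement's English description precedes it below -/
import Mathlib

section
/- Let B be a unital complex *-algebra, β an exponential one-parameter group on B, c a nonzero purely imaginary complex number, and τ : B → ℂ a linear functional with τ ∘ β_c = τ. Then τ ∘ β_z = τ for every z ∈ ℂ. -/
/-- A function `f : ℂ → ℂ` is of exponential type: it is entire and satisfies a bound
`|f z| ≤ M * exp (r * |Im z|)`. -/
def ExpType (f : ℂ → ℂ) : Prop :=
  Differentiable ℂ f ∧
    ∃ M r : ℝ, 0 < M ∧ 0 < r ∧ ∀ z : ℂ, ‖f z‖ ≤ M * Real.exp (r * |z.im|)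

/-- A function from `ℂ` into a complex vector space `V` is of finite exponential type if it is a
finite linear combination of functions of exponential type with coefficients in `V`. -/
def FinExpType {V : Type*} [AddCommGroup V] [Module ℂ V] (f : ℂ → V) : Prop :=
  ∃ (n : ℕ) (v : Fin n → V) (g : Fin n → ℂ → ℂ),
    (∀ j, ExpType (g j)) ∧ ∀ z : ℂ, f z = ∑ j, g j z • v j

/-- A one-parameter group on a unital complex *-algebra `B`: a family of algebra automorphisms
`β z` with `β (y + z) = β y ∘ β z` and `star (β z b) = β (conj z) (star b)`. -/
def IsOneParamGroup {B : Type*} [Ring B] [Algebra ℂ B] [StarRing B] [StarModule ℂ B]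
    (β : ℂ → (B ≃ₐ[ℂ] B)) : Prop :=
  (∀ y z : ℂ, ∀ b : B, β (y + z) b = β y (β z b)) ∧
    (∀ z : ℂ, ∀ b : B, star (β z b) = β (starRingEnd ℂ z) (star b))

/-- An exponential one-parameter group: a one-parameter group such that `z ↦ β z b` is of finite
exponential type for every `b`. -/
def IsExpOneParamGroup {B : Type*} [Ring B] [Algebra ℂ B] [StarRing B] [StarModule ℂ B]
    (β : ℂ → (B ≃ₐ[ℂ] B)) : Prop :=
  IsOneParamGroup β ∧ ∀ b : B, FinExpType (fun z => β z b)


/-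
A functional `τ` invariant under `β c` makes every `f w = τ (β w b)` periodic with period `c`.
Since `z ↦ β z b` is of finite exponential type, `f` is entire and bounded on each horizontal strip;
as `c` is purely imaginary and nonzero, translates by multiples of `c` bring every point into one
such strip, so `f` is bounded, hence constant by Liouville, and `f z = f 0 = τ b`.
-/

open Bornology Function

namespace ExpType

theorem zero : ExpType fun _ => 0 :=
  ⟨differentiable_const 0, 1, 1, one_pos, one_pos, fun _ => by simp only [norm_zero]; positivity⟩

theorem const_mul {f : ℂ → ℂ} (hf : ExpType f) (a : ℂ) : ExpType fun z => a * f z := by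
  obtain ⟨hdiff, M, r, hM, hr, hbound⟩ := hf
  refine ⟨hdiff.const_mul a, (‖a‖ + 1) * M, r, by positivity, hr, fun z => ?_⟩
  rw [norm_mul, mul_assoc]
  gcongr
  · linarith
  · exact hbound z

theorem add {f g : ℂ → ℂ} (hf : ExpType f) (hg : ExpType g) : ExpType fun z => f z + g z := by
  obtain ⟨hfdiff, M, r, hM, hr, hfbound⟩ := hf
  obtain ⟨hgdiff, N, s, hN, hs, hgbound⟩ := hg
  refine ⟨hfdiff.add hgdiff, M + N, max r s, by positivity, lt_max_of_lt_left hr, fun z => ?_⟩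
  calc ‖f z + g z‖ ≤ M * Real.exp (r * |z.im|) + N * Real.exp (s * |z.im|) :=
        (norm_add_le _ _).trans (add_le_add (hfbound z) (hgbound z))
    _ ≤ M * Real.exp (max r s * |z.im|) + N * Real.exp (max r s * |z.im|) := by
        gcongr
        exacts [le_max_left r s, le_max_right r s]
    _ = (M + N) * Real.exp (max r s * |z.im|) := by ring

theorem sum {ι : Type*} (s : Finset ι) {f : ι → ℂ → ℂ} (hf : ∀ i ∈ s, ExpType (f i)) :
    ExpType fun z => ∑ i ∈ s, f i z := by
  simp only [← Finset.sum_apply]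
  exact Finset.sum_induction f ExpType (fun _ _ => add) zero hf

theorem exists_norm_le_of_abs_im_le {f : ℂ → ℂ} (hf : ExpType f) (h : ℝ) :
    ∃ C, ∀ w : ℂ, |w.im| ≤ h → ‖f w‖ ≤ C := by
  obtain ⟨-, M, r, hM, hr, hbound⟩ := hf
  exact ⟨M * Real.exp (r * h), fun w hw => (hbound w).trans (by gcongr)⟩

end ExpType

theorem FinExpType.expType_linearMap_comp {V : Type*} [AddCommGroup V] [Module ℂ V]
    {f : ℂ → V} (hf : FinExpType f) (τ : V →ₗ[ℂ] ℂ) : ExpType fun z => τ (f z) := by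
  obtain ⟨n, v, g, hg, hrep⟩ := hf
  have hτf : (fun z => τ (f z)) = fun z => ∑ j, τ (v j) * g j z := by
    ext z
    simp only [hrep, map_sum, map_smul, smul_eq_mul, mul_comm]
  rw [hτf]
  exact ExpType.sum _ fun j _ => (hg j).const_mul (τ (v j))

theorem Complex.exists_int_abs_im_add_int_mul_le {c : ℂ} (hc : c.im ≠ 0) (w : ℂ) :
    ∃ k : ℤ, |(w + k * c).im| ≤ |c.im| / 2 := by
  refine ⟨round (-w.im / c.im), ?_⟩
  have him : (w + round (-w.im / c.im) * c).im = c.im * (round (-w.im / c.im) - -w.im / c.im) := by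
    simp only [add_im, mul_im, intCast_re, intCast_im, zero_mul, add_zero]
    field_simp
    ring
  rw [him, abs_mul, abs_sub_comm]
  exact (mul_le_mul_of_nonneg_left (abs_sub_round _) (abs_nonneg _)).trans_eq (by ring)

theorem ExpType.apply_eq_apply_of_periodic {f : ℂ → ℂ} (hf : ExpType f) {c : ℂ}
    (hper : Periodic f c) (hc : c.im ≠ 0) (z w : ℂ) : f z = f w := by
  obtain ⟨C, hC⟩ := hf.exists_norm_le_of_abs_im_le (|c.im| / 2)
  have hbdd : IsBounded (Set.range f) := by
    refine isBounded_iff_forall_norm_le.2 ⟨C, ?_⟩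
    rintro _ ⟨u, rfl⟩
    obtain ⟨k, hk⟩ := Complex.exists_int_abs_im_add_int_mul_le hc u
    rw [← hper.int_mul k u]
    exact hC _ hk
  exact hf.1.apply_eq_apply_of_bounded hbdd z w

theorem IsOneParamGroup.apply_zero {B : Type*} [Ring B] [Algebra ℂ B] [StarRing B]
    [StarModule ℂ B] {β : ℂ → (B ≃ₐ[ℂ] B)} (hβ : IsOneParamGroup β) (b : B) : β 0 b = b :=
  (β 0).injective (by simpa only [add_zero] using (hβ.1 0 0 b).symm)

/-- If a linear functional on a unital complex *-algebra is invariant under an exponential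
one-parameter group at a nonzero purely imaginary number `c`, then it is invariant at every
`z ∈ ℂ`. -/
theorem linear_functional_invariant_of_invariant_at_imaginary
    {B : Type*} [Ring B] [Algebra ℂ B] [StarRing B] [StarModule ℂ B]
    (β : ℂ → (B ≃ₐ[ℂ] B)) (hβ : IsExpOneParamGroup β)
    (c : ℂ) (hc : c ≠ 0) (hcim : c.re = 0)
    (τ : B →ₗ[ℂ] ℂ) (hτ : ∀ b : B, τ (β c b) = τ b) :
    ∀ z : ℂ, ∀ b : B, τ (β z b) = τ b := by
  intro z b
  have hcim' : c.im ≠ 0 := fun h => hc (Complex.ext hcim h)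
  have hper : Periodic (fun w => τ (β w b)) c := fun w => by
    simp only [add_comm w c, hβ.1.1 c w b, hτ]
  have hconst := ((hβ.2 b).expType_linearMap_comp τ).apply_eq_apply_of_periodic hper hcim' z 0
  simpa only [hβ.1.apply_zero] using hconst
end

section
/- Let B be a unital complex *-algebra and h : B → ℂ a linear functional such that h(b*) is the complex conjugate of h(b) for all b ∈ B, and such that h is faithful in the sense that for b ∈ B, if h(b·c) = 0 for all c ∈ B then b = 0. Let φ : B → B be a surjective algebra homomorphism with h ∘ φ = h and such that h(a*·φ(a)) is a real number for every a ∈ B. Then φ(φ(a*)*) = a for all a ∈ B. -/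
/-!
The hypothesis on `h (a* φ a)` says that the sesquilinear form `(a, b) ↦ h (a* φ b)` is real on
the diagonal, so by polarization it is hermitian. Together with `h (b*) = conj (h b)` this makes
`φ` self-adjoint for `(a, b) ↦ h (a* b)`. Hence, using `h ∘ φ = h`,
`h (φ (φ (a*)*) φ d) = h (φ (a*)* d) = h (a φ d)` for all `d`; as `φ` is surjective and `h` is
faithful, `φ (φ (a*)*) = a`.
-/

open ComplexConjugate

theorem LinearMap.isSymm_of_im_apply_self_eq_zero {M : Type*} [AddCommGroup M] [Module ℂ M]
    (f : M →ₗ⋆[ℂ] M →ₗ[ℂ] ℂ) (hf : ∀ x, (f x x).im = 0) : f.IsSymm := by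
  refine LinearMap.isSymm_def.mpr fun x y ↦ ?_
  have him : (f x y).im + (f y x).im = 0 := by
    have := hf (x + y)
    simp only [map_add, LinearMap.add_apply, Complex.add_im, hf x, hf y] at this
    linarith
  have hre : (f x y).re - (f y x).re = 0 := by
    have := hf (x + Complex.I • y)
    simp only [map_add, map_smulₛₗ, LinearMap.add_apply, LinearMap.smul_apply, smul_eq_mul,
      Complex.conj_I, RingHom.id_apply, Complex.add_im, Complex.add_re, Complex.mul_im,
      Complex.mul_re, Complex.neg_re, Complex.neg_im, Complex.I_re, Complex.I_im, hf x,
      hf y] at this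
    linarith
  apply Complex.ext <;> simp only [Complex.conj_re, Complex.conj_im] <;> linarith

section StarMulForm

variable {B : Type*} [Ring B] [Algebra ℂ B] [StarRing B] [StarModule ℂ B]

/-- The sesquilinear form `(a, b) ↦ h (star a * T b)`. -/
def starMulForm (h : B →ₗ[ℂ] ℂ) (T : B →ₗ[ℂ] B) : B →ₗ⋆[ℂ] B →ₗ[ℂ] ℂ :=
  (((LinearMap.mul ℂ B).compl₂ T).compr₂ h).comp (starLinearEquiv ℂ).toLinearMap

theorem apply_star_mul_comm_of_isSymm {h : B →ₗ[ℂ] ℂ} (hstar : ∀ b, h (star b) = conj (h b))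
    {T : B →ₗ[ℂ] B} (hT : (starMulForm h T).IsSymm) (a b : B) :
    h (star a * T b) = h (star (T a) * b) :=
  calc h (star a * T b) = conj (h (star b * T a)) := (hT.eq b a).symm
    _ = h (star (T a) * b) := by rw [← hstar, star_mul, star_star]

end StarMulForm

/-- Lemma 7.2 of the paper: let `h` be a faithful linear functional on a unital complex
*-algebra `B` with `h (b*) = conj (h b)`, and let `φ` be a surjective algebra endomorphism of
`B` preserving `h` such that `h (a* * φ a)` is real for all `a`. Then `φ (φ (a*)*) = a` for
all `a`. -/
theorem involutive_of_hermitian_form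
    {B : Type*} [Ring B] [Algebra ℂ B] [StarRing B] [StarModule ℂ B]
    (h : B →ₗ[ℂ] ℂ)
    (hstar : ∀ b : B, h (star b) = starRingEnd ℂ (h b))
    (hfaith : ∀ b : B, (∀ c : B, h (b * c) = 0) → b = 0)
    (φ : B →ₐ[ℂ] B) (hsurj : Function.Surjective φ)
    (hφh : ∀ b : B, h (φ b) = h b)
    (hreal : ∀ a : B, (h (star a * φ a)).im = 0) :
    ∀ a : B, φ (star (φ (star a))) = a := by
  have hφ_symm := (starMulForm h φ.toLinearMap).isSymm_of_im_apply_self_eq_zero hreal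
  intro a
  refine sub_eq_zero.mp (hfaith _ fun c ↦ ?_)
  obtain ⟨d, rfl⟩ := hsurj c
  have hφ_adjoint := apply_star_mul_comm_of_isSymm hstar hφ_symm (star a) d
  rw [star_star] at hφ_adjoint
  rw [sub_mul, map_sub, sub_eq_zero, ← map_mul, hφh]
  exact hφ_adjoint.symm
end

section
/- Let B be a unital complex *-algebra and h : B → ℂ a linear functional such that h(a*·a) is a nonnegative real number for every a ∈ B. Let φ be an algebra automorphism of B with h ∘ φ = h and with φ(φ(a*)*) = a for all a ∈ B. Then for every a ∈ B the number h(a*·φ(φ(a))) is a nonnegative real number. -/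
open scoped ComplexOrder

/-- Implication (2) ⟹ (1) of Corollary 7.7 of the paper: if `h` is a positive linear functional
on a unital complex *-algebra `B` and `φ` is an algebra automorphism of `B` with `h ∘ φ = h` and
`φ (φ (a*)*) = a` for all `a`, then `h (a* * φ (φ a))` is a nonnegative real number for every
`a`. -/
theorem positivity_of_square_of_automorphism
    {B : Type*} [Ring B] [Algebra ℂ B] [StarRing B] [StarModule ℂ B]
    (h : B →ₗ[ℂ] ℂ)
    (hpos : ∀ a : B, 0 ≤ h (star a * a))
    (φ : B ≃ₐ[ℂ] B)
    (hφh : ∀ b : B, h (φ b) = h b)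
    (hinv : ∀ a : B, φ (star (φ (star a))) = a) :
    ∀ a : B, 0 ≤ h (star a * φ (φ a)) := by
  intro a
  have key : φ (star (φ a)) = star a := by simpa using hinv (star a)
  have e : star a * φ (φ a) = φ (star (φ a) * φ a) := by rw [map_mul, key]
  rw [e, hφh]
  exact hpos (φ a)
end

section
/- Let B be a unital complex *-algebra equipped with an inner product, and let σ be an algebra automorphism of B with σ(σ(b*)*) = b for all b ∈ B. Suppose B admits an orthonormal (algebraic) basis (e_j)_{j∈J} as a ℂ-vector space and positive real numbers (λ_j)_{j∈J} such that σ(e_j) = λ_j·e_j for all j ∈ J. Then there exists a unique exponential one-parameter group β on B with β_i = σ, and it satisfies β_z(e_j) = λ_j^{−iz}·e_j for all j ∈ J and z ∈ ℂ. -/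
open Complex ComplexConjugate Module

def expTypeSubmodule : Submodule ℂ (ℂ → ℂ) where
  carrier := {f | ExpType f}
  zero_mem' := ⟨differentiable_const 0, 1, 1, one_pos, one_pos, fun z => by
    rw [Pi.zero_apply, norm_zero, one_mul]; positivity⟩
  add_mem' := by
    rintro f g ⟨hf, M₁, r₁, hM₁, hr₁, hbf⟩ ⟨hg, M₂, r₂, hM₂, hr₂, hbg⟩
    refine ⟨hf.add hg, M₁ + M₂, max r₁ r₂, by positivity, lt_max_of_lt_left hr₁, fun z => ?_⟩
    calc ‖f z + g z‖ ≤ ‖f z‖ + ‖g z‖ := norm_add_le _ _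
      _ ≤ M₁ * Real.exp (max r₁ r₂ * |z.im|) + M₂ * Real.exp (max r₁ r₂ * |z.im|) := by
        gcongr
        · exact (hbf z).trans (by gcongr; exact le_max_left _ _)
        · exact (hbg z).trans (by gcongr; exact le_max_right _ _)
      _ = (M₁ + M₂) * Real.exp (max r₁ r₂ * |z.im|) := by ring
  smul_mem' := by
    rintro c f ⟨hf, M, r, hM, hr, hb⟩
    refine ⟨hf.const_smul c, (‖c‖ + 1) * M, r, by positivity, hr, fun z => ?_⟩
    calc ‖c * f z‖ = ‖c‖ * ‖f z‖ := norm_mul _ _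
      _ ≤ (‖c‖ + 1) * (M * Real.exp (r * |z.im|)) := by
        gcongr
        · linarith
        · exact hb z
      _ = (‖c‖ + 1) * M * Real.exp (r * |z.im|) := by ring

theorem mem_expTypeSubmodule {f : ℂ → ℂ} : f ∈ expTypeSubmodule ↔ ExpType f := Iff.rfl

theorem ExpType.norm_le_of_abs_im_le_one {f : ℂ → ℂ} (hf : ExpType f) :
    ∃ C, ∀ z : ℂ, |z.im| ≤ 1 → ‖f z‖ ≤ C := by
  obtain ⟨-, M, r, hM, hr, hb⟩ := hf
  exact ⟨M * Real.exp r, fun z hz => (hb z).trans (by gcongr; nlinarith)⟩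

theorem FinExpType.expType_comp {V : Type*} [AddCommGroup V] [Module ℂ V] {f : ℂ → V}
    (hf : FinExpType f) (φ : V →ₗ[ℂ] ℂ) : ExpType fun z => φ (f z) := by
  obtain ⟨n, v, g, hg, hfg⟩ := hf
  have : (fun z => φ (f z)) = ∑ j, φ (v j) • g j := by
    ext z; simp [hfg, mul_comm]
  rw [this, ← mem_expTypeSubmodule]
  exact Submodule.sum_mem _ fun j _ => Submodule.smul_mem _ _ (hg j)

theorem finExpType_finset_sum {V ι : Type*} [AddCommGroup V] [Module ℂ V] (s : Finset ι)
    {g : ι → ℂ → ℂ} (hg : ∀ i ∈ s, ExpType (g i)) (v : ι → V) :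
    FinExpType fun z => ∑ i ∈ s, g i z • v i := by
  let eq := s.equivFin
  refine ⟨s.card, fun t => v (eq.symm t), fun t => g (eq.symm t), fun t => hg _ (eq.symm t).2,
    fun z => ?_⟩
  dsimp only
  rw [← s.sum_coe_sort]
  exact (eq.symm.sum_comp fun i : s => g i z • v i).symm

/-- `imagPow μ z` is `μ ^ (-i z)`. -/
noncomputable def imagPow (μ : ℝ) (z : ℂ) : ℂ := exp (-(I * z) * Real.log μ)

theorem imagPow_add (μ : ℝ) (y z : ℂ) : imagPow μ (y + z) = imagPow μ y * imagPow μ z := by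
  simp only [imagPow, ← exp_add]; ring_nf

theorem imagPow_zero (μ : ℝ) : imagPow μ 0 = 1 := by simp [imagPow]

theorem imagPow_neg_mul_self (μ : ℝ) (z : ℂ) : imagPow μ (-z) * imagPow μ z = 1 := by
  rw [← imagPow_add, neg_add_cancel, imagPow_zero]

theorem imagPow_I {μ : ℝ} (hμ : 0 < μ) : imagPow μ I = μ := by
  rw [imagPow, I_mul_I, neg_neg, one_mul, ← ofReal_exp, Real.exp_log hμ]

theorem imagPow_one_left (z : ℂ) : imagPow 1 z = 1 := by simp [imagPow]

theorem imagPow_mul {μ ν : ℝ} (hμ : μ ≠ 0) (hν : ν ≠ 0) (z : ℂ) :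
    imagPow (μ * ν) z = imagPow μ z * imagPow ν z := by
  simp only [imagPow, Real.log_mul hμ hν, ← exp_add]; push_cast; ring_nf

theorem imagPow_inv_conj (μ : ℝ) (z : ℂ) : imagPow μ⁻¹ (conj z) = conj (imagPow μ z) := by
  simp only [imagPow, Real.log_inv, ← exp_conj, map_mul, map_neg, conj_I, conj_ofReal]
  push_cast; ring_nf

theorem norm_imagPow (μ : ℝ) (z : ℂ) : ‖imagPow μ z‖ = Real.exp (z.im * Real.log μ) := by
  simp [imagPow, norm_exp]

theorem expType_imagPow (μ : ℝ) : ExpType (imagPow μ) := by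
  refine ⟨fun z => by unfold imagPow; fun_prop, 1, |Real.log μ| + 1, one_pos, by positivity,
    fun z => ?_⟩
  rw [norm_imagPow, one_mul, Real.exp_le_exp]
  calc z.im * Real.log μ ≤ |z.im| * |Real.log μ| := by rw [← abs_mul]; exact le_abs_self _
    _ ≤ (|Real.log μ| + 1) * |z.im| := by nlinarith [abs_nonneg z.im]

theorem Differentiable.apply_eq_apply_of_periodic_I {F : ℂ → ℂ} (hF : Differentiable ℂ F)
    (hper : Function.Periodic F I) {C : ℝ} (hC : ∀ z : ℂ, |z.im| ≤ 1 → ‖F z‖ ≤ C) (z w : ℂ) :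
    F z = F w := by
  refine hF.apply_eq_apply_of_bounded
    ((Metric.isBounded_closedBall (x := 0) (r := C)).subset ?_) z w
  rintro _ ⟨x, rfl⟩
  rw [mem_closedBall_zero_iff, ← hper.sub_int_mul_eq ⌊x.im⌋]
  refine hC _ (abs_le.2 ⟨?_, ?_⟩) <;> simp <;>
    linarith [Int.fract_nonneg x.im, Int.fract_lt_one x.im]

theorem ExpType.eq_imagPow_mul {f : ℂ → ℂ} (hf : ExpType f) {μ : ℝ} (hμ : 0 < μ)
    (hshift : ∀ z, f (z + I) = μ * f z) (z : ℂ) : f z = imagPow μ z * f 0 := by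
  set F : ℂ → ℂ := fun z => imagPow μ (-z) * f z
  have hper : Function.Periodic F I := fun z => by
    simp only [F, hshift, neg_add, imagPow_add, ← imagPow_I hμ]
    linear_combination imagPow μ (-z) * f z * (imagPow_neg_mul_self μ I)
  obtain ⟨C, hC⟩ := hf.norm_le_of_abs_im_le_one
  have hFbound : ∀ z : ℂ, |z.im| ≤ 1 → ‖F z‖ ≤ Real.exp |Real.log μ| * C := fun z hz => by
    rw [norm_mul, norm_imagPow]
    refine mul_le_mul (Real.exp_le_exp.2 ?_) (hC z hz) (norm_nonneg _) (by positivity)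
    calc (-z).im * Real.log μ ≤ |(-z).im| * |Real.log μ| := by
          rw [← abs_mul]; exact le_abs_self _
      _ ≤ |Real.log μ| := by
          rw [neg_im, abs_neg]; exact mul_le_of_le_one_left (abs_nonneg _) hz
  have hFd : Differentiable ℂ F := (expType_imagPow μ).1.comp differentiable_neg |>.mul hf.1
  calc f z = imagPow μ z * F z := by
        rw [← mul_assoc, mul_comm (imagPow μ z), imagPow_neg_mul_self, one_mul]
    _ = imagPow μ z * f 0 := by
        rw [hFd.apply_eq_apply_of_periodic_I hper hFbound z 0]
        simp [F, imagPow_zero]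

theorem apply_eq_imagPow_smul_of_apply_I_eq_smul {B : Type*} [Ring B] [Algebra ℂ B]
    {γ : ℂ → (B ≃ₐ[ℂ] B)} (hadd : ∀ y z : ℂ, ∀ b : B, γ (y + z) b = γ y (γ z b))
    {v : B} (hfin : FinExpType fun z => γ z v) {μ : ℝ} (hμ : 0 < μ) (hI : γ I v = (μ : ℂ) • v)
    (z : ℂ) : γ z v = imagPow μ z • v := by
  have hzero : γ 0 v = v := (γ 0).injective (by rw [← hadd, add_zero])
  rw [← sub_eq_zero, ← Module.forall_dual_apply_eq_zero_iff ℂ]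
  intro φ
  have hshift : ∀ w, φ (γ (w + I) v) = μ * φ (γ w v) := fun w => by
    rw [hadd, hI, map_smul, map_smul, smul_eq_mul]
  rw [map_sub, map_smul, (hfin.expType_comp φ).eq_imagPow_mul hμ hshift, hzero, smul_eq_mul,
    sub_self]

namespace Module.Basis

variable {K V J : Type*} [CommRing K] [AddCommGroup V] [Module K V] (e : Basis J K V)

noncomputable def diagonal (w : J → K) : V →ₗ[K] V := e.constr K fun j => w j • e j

@[simp]
theorem diagonal_apply_basis (w : J → K) (j : J) : e.diagonal w (e j) = w j • e j :=
  e.constr_basis K _ j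

theorem repr_diagonal_apply (w : J → K) (v : V) (l : J) :
    e.repr (e.diagonal w v) l = w l * e.repr v l := by
  have : (e.coord l).comp (e.diagonal w) = w l • e.coord l := e.ext fun j => by
    rcases eq_or_ne j l with rfl | h
    · simp
    · simp [h]
  simpa using LinearMap.congr_fun this v

theorem diagonal_comp_diagonal (w w' : J → K) :
    (e.diagonal w).comp (e.diagonal w') = e.diagonal (w * w') :=
  e.ext fun j => by simp [smul_smul, mul_comm]

theorem diagonal_one : e.diagonal 1 = LinearMap.id :=
  e.ext fun j => by simp

theorem diagonal_apply_of_eigen [IsDomain K] {f : V →ₗ[K] V} {lam w : J → K}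
    (hf : ∀ j, f (e j) = lam j • e j) {μ c : K} (hw : ∀ j, lam j = μ → w j = c) {v : V}
    (hv : f v = μ • v) : e.diagonal w v = c • v := by
  obtain rfl : f = e.diagonal lam := e.ext fun j => by simp [hf]
  refine e.ext_elem_iff.2 fun l => ?_
  have hl : lam l * e.repr v l = μ * e.repr v l := by
    rw [← repr_diagonal_apply, hv]; simp
  rw [repr_diagonal_apply, map_smul, Finsupp.smul_apply, smul_eq_mul]
  rcases eq_or_ne (e.repr v l) 0 with h | h
  · simp [h]
  · rw [hw l (mul_right_cancel₀ h hl)]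

end Module.Basis

section TwistGroup

variable {B J : Type*} [Ring B] [Algebra ℂ B] {σ : B ≃ₐ[ℂ] B} {e : Basis J ℂ B} {lam : J → ℝ}

theorem diagonal_imagPow_comp (y z : ℂ) :
    (e.diagonal fun j => imagPow (lam j) y).comp (e.diagonal fun j => imagPow (lam j) z) =
      e.diagonal fun j => imagPow (lam j) (y + z) := by
  rw [Basis.diagonal_comp_diagonal]
  congr; ext j; exact (imagPow_add _ _ _).symm

theorem diagonal_imagPow_zero : (e.diagonal fun j => imagPow (lam j) 0) = LinearMap.id := by
  simp only [imagPow_zero]; exact e.diagonal_one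

theorem AlgEquiv.map_star_of_eigen [StarRing B] [StarModule ℂ B]
    (hσ : ∀ b : B, σ (star (σ (star b))) = b) {v : B} {c : ℂ} (hc : c ≠ 0)
    (hv : σ v = c • v) : σ (star v) = (conj c)⁻¹ • star v := by
  have : star (σ (star v)) = c⁻¹ • v :=
    σ.injective (by rw [hσ, map_smul, hv, smul_smul, inv_mul_cancel₀ hc, one_smul])
  rw [← star_star (σ (star v)), this, star_smul, Complex.star_def, map_inv₀]

theorem diagonal_imagPow_apply_of_eigen (heig : ∀ j, σ (e j) = (lam j : ℂ) • e j) {v : B}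
    {μ : ℝ} (hv : σ v = (μ : ℂ) • v) (z : ℂ) :
    e.diagonal (fun j => imagPow (lam j) z) v = imagPow μ z • v :=
  e.diagonal_apply_of_eigen (f := σ.toLinearMap) heig
    (fun j hj => by rw [Complex.ofReal_inj.1 hj]) hv

theorem diagonal_imagPow_mul (hlam : ∀ j, 0 < lam j) (heig : ∀ j, σ (e j) = (lam j : ℂ) • e j)
    (z : ℂ) (x y : B) :
    e.diagonal (fun j => imagPow (lam j) z) (x * y) =
      e.diagonal (fun j => imagPow (lam j) z) x * e.diagonal (fun j => imagPow (lam j) z) y := by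
  set D := e.diagonal fun j => imagPow (lam j) z
  suffices (LinearMap.mul ℂ B).compr₂ D = (LinearMap.mul ℂ B).compl₁₂ D D from
    LinearMap.congr_fun (LinearMap.congr_fun this x) y
  refine LinearMap.ext_basis e e fun j k => ?_
  have hjk : σ (e j * e k) = ((lam j * lam k : ℝ) : ℂ) • (e j * e k) := by
    rw [map_mul, heig, heig, smul_mul_smul_comm, Complex.ofReal_mul]
  simp only [LinearMap.compr₂_apply, LinearMap.compl₁₂_apply, LinearMap.mul_apply', D,
    diagonal_imagPow_apply_of_eigen heig hjk, Basis.diagonal_apply_basis,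
    imagPow_mul (hlam j).ne' (hlam k).ne', smul_mul_smul_comm]

theorem diagonal_imagPow_one (heig : ∀ j, σ (e j) = (lam j : ℂ) • e j) (z : ℂ) :
    e.diagonal (fun j => imagPow (lam j) z) 1 = 1 := by
  rw [diagonal_imagPow_apply_of_eigen heig (μ := 1) (by simp), imagPow_one_left, one_smul]

variable (hlam : ∀ j, 0 < lam j) (heig : ∀ j, σ (e j) = (lam j : ℂ) • e j)

noncomputable def twistGroup (z : ℂ) : B ≃ₐ[ℂ] B :=
  AlgEquiv.ofLinearEquiv
    (LinearEquiv.ofLinearMap (e.diagonal fun j => imagPow (lam j) z)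
      (e.diagonal fun j => imagPow (lam j) (-z))
      (by rw [diagonal_imagPow_comp, add_neg_cancel, diagonal_imagPow_zero])
      (by rw [diagonal_imagPow_comp, neg_add_cancel, diagonal_imagPow_zero]))
    (diagonal_imagPow_one heig z) (diagonal_imagPow_mul hlam heig z)

theorem twistGroup_apply (z : ℂ) (b : B) :
    twistGroup hlam heig z b = e.diagonal (fun j => imagPow (lam j) z) b := rfl

theorem twistGroup_apply_basis (j : J) (z : ℂ) :
    twistGroup hlam heig z (e j) = imagPow (lam j) z • e j := by
  simp [twistGroup_apply]

theorem twistGroup_add (y z : ℂ) (b : B) :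
    twistGroup hlam heig (y + z) b = twistGroup hlam heig y (twistGroup hlam heig z b) := by
  simp only [twistGroup_apply, ← LinearMap.comp_apply, diagonal_imagPow_comp]

theorem twistGroup_I (b : B) : twistGroup hlam heig I b = σ b := by
  rw [twistGroup_apply, ← AlgEquiv.toLinearMap_apply]
  congr 1
  refine e.ext fun j => ?_
  simp [imagPow_I (hlam j), heig]

theorem star_twistGroup_apply [StarRing B] [StarModule ℂ B]
    (hσ : ∀ b : B, σ (star (σ (star b))) = b) (z : ℂ) (b : B) :
    star (twistGroup hlam heig z b) = twistGroup hlam heig (conj z) (star b) := by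
  let starL : B →ₗ⋆[ℂ] B := (starLinearEquiv ℂ).toLinearMap
  suffices starL.comp (twistGroup hlam heig z).toLinearMap =
      (twistGroup hlam heig (conj z)).toLinearMap.comp starL from LinearMap.congr_fun this b
  refine e.ext fun j => ?_
  have hstar : σ (star (e j)) = (((lam j)⁻¹ : ℝ) : ℂ) • star (e j) := by
    rw [σ.map_star_of_eigen hσ (Complex.ofReal_ne_zero.2 (hlam j).ne') (heig j),
      Complex.conj_ofReal, Complex.ofReal_inv]
  simp [starL, twistGroup_apply, diagonal_imagPow_apply_of_eigen heig hstar, imagPow_inv_conj]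

theorem finExpType_twistGroup (b : B) : FinExpType fun z => twistGroup hlam heig z b := by
  have hexpand : ∀ z, twistGroup hlam heig z b =
      ∑ j ∈ (e.repr b).support, imagPow (lam j) z • (e.repr b j • e j) := fun z => by
    conv_lhs => rw [← e.linearCombination_repr b, Finsupp.linearCombination_apply, Finsupp.sum]
    simp [map_sum, twistGroup_apply_basis, smul_comm (imagPow _ z)]
  simp only [hexpand]
  exact finExpType_finset_sum _ (fun j _ => expType_imagPow (lam j)) _

theorem isExpOneParamGroup_twistGroup [StarRing B] [StarModule ℂ B]
    (hσ : ∀ b : B, σ (star (σ (star b))) = b) : IsExpOneParamGroup (twistGroup hlam heig) :=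
  ⟨⟨twistGroup_add hlam heig, star_twistGroup_apply hlam heig hσ⟩,
    finExpType_twistGroup hlam heig⟩

end TwistGroup

open scoped ComplexOrder Classical

theorem exists_unique_exp_one_param_group_of_positive_twist_general
    {B : Type*} [Ring B] [Algebra ℂ B] [StarRing B] [StarModule ℂ B]
    (σ : B ≃ₐ[ℂ] B) (hσ : ∀ b : B, σ (star (σ (star b))) = b)
    {J : Type*} (e : Module.Basis J ℂ B)
    (lam : J → ℝ) (hlam : ∀ j, 0 < lam j)
    (heig : ∀ j, σ (e j) = (lam j : ℂ) • e j) :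
    ∃ β : ℂ → (B ≃ₐ[ℂ] B),
      (IsExpOneParamGroup β ∧ ∀ b : B, β Complex.I b = σ b) ∧
      (∀ γ : ℂ → (B ≃ₐ[ℂ] B),
        (IsExpOneParamGroup γ ∧ ∀ b : B, γ Complex.I b = σ b) → γ = β) ∧
      (∀ (j : J) (z : ℂ),
        β z (e j) = Complex.exp (-(Complex.I * z) * (Real.log (lam j) : ℂ)) • e j) := by
  refine ⟨twistGroup hlam heig,
    ⟨isExpOneParamGroup_twistGroup hlam heig hσ, twistGroup_I hlam heig⟩, ?_,
    twistGroup_apply_basis hlam heig⟩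
  rintro γ ⟨⟨⟨hadd, -⟩, hfin⟩, hγI⟩
  funext z
  refine AlgEquiv.toLinearMap_injective (e.ext fun j => ?_)
  have hγ := apply_eq_imagPow_smul_of_apply_I_eq_smul hadd (hfin (e j)) (hlam j)
    (by rw [hγI, heig]) z
  simp only [AlgEquiv.toLinearMap_apply, hγ, twistGroup_apply_basis]

/-- Theorem 7.8 of the paper: let `B` be a unital complex *-algebra equipped with an inner
product `ip`, and let `σ` be an algebra automorphism with `σ (σ (b*)*) = b` that is diagonalised
with positive eigenvalues `λ_j` by an orthonormal basis `(e_j)`. Then there is a unique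
exponential one-parameter group `β` on `B` with `β_i = σ`, and it satisfies
`β_z (e_j) = λ_j ^ (-iz) • e_j`. -/
theorem exists_unique_exp_one_param_group_of_positive_twist
    {B : Type*} [Ring B] [Algebra ℂ B] [StarRing B] [StarModule ℂ B]
    (ip : B → B → ℂ)
    (ip_add : ∀ x y z : B, ip (x + y) z = ip x z + ip y z)
    (ip_smul : ∀ (c : ℂ) (x y : B), ip (c • x) y = c * ip x y)
    (ip_conj : ∀ x y : B, ip y x = starRingEnd ℂ (ip x y))
    (ip_pos : ∀ x : B, x ≠ 0 → 0 < ip x x)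
    (σ : B ≃ₐ[ℂ] B) (hσ : ∀ b : B, σ (star (σ (star b))) = b)
    {J : Type*} (e : Module.Basis J ℂ B)
    (hON : ∀ j k : J, ip (e j) (e k) = (if j = k then 1 else 0))
    (lam : J → ℝ) (hlam : ∀ j, 0 < lam j)
    (heig : ∀ j, σ (e j) = (lam j : ℂ) • e j) :
    ∃ β : ℂ → (B ≃ₐ[ℂ] B),
      (IsExpOneParamGroup β ∧ ∀ b : B, β Complex.I b = σ b) ∧
      (∀ γ : ℂ → (B ≃ₐ[ℂ] B),
        (IsExpOneParamGroup γ ∧ ∀ b : B, γ Complex.I b = σ b) → γ = β) ∧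
      (∀ (j : J) (z : ℂ),
        β z (e j) = Complex.exp (-(Complex.I * z) * (Real.log (lam j) : ℂ)) • e j) :=
  exists_unique_exp_one_param_group_of_positive_twist_general σ hσ e lam hlam heig
end

section
/- Let V be a complex inner product space and let d, δ : V → V be linear maps with ⟪d x, y⟫ = ⟪x, δ y⟫ for all x, y ∈ V and with d ∘ d = 0; set ∇ = d∘δ + δ∘d. Assume there is a family (W_i)_{i∈I} of finite-dimensional subspaces of V, pairwise orthogonal, each invariant under both d and δ, whose supremum (algebraic span) is all of V. Then the subspaces ker ∇, range d and range δ are pairwise orthogonal and V = ker ∇ + range d + range δ; that is, V decomposes as the orthogonal direct sum ker ∇ ⊕ range d ⊕ range δ (the Hodge decomposition). -/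
/-!
Since `δ` is adjoint to `d`, the Laplacian `∇ = dδ + δd` is symmetric and
`re ⟪∇x, x⟫ = ‖δx‖² + ‖dx‖²`, so a harmonic `x` satisfies `dx = δx = 0`; this gives the three
orthogonality relations (with `d² = 0` for `range d ⟂ range δ`). For the spanning statement, `∇`
restricts to a symmetric operator on each finite-dimensional invariant `W i`, which therefore
splits as `range ∇ ⊕ ker ∇`, and `range ∇ ≤ range d ⊔ range δ`.
-/

section

open LinearMap Submodule

variable {𝕜 V : Type*} [RCLike 𝕜] [NormedAddCommGroup V] [InnerProductSpace 𝕜 V]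

theorem LinearMap.IsSymmetric.range_sup_ker_eq_top [FiniteDimensional 𝕜 V] {T : V →ₗ[𝕜] V}
    (hT : T.IsSymmetric) : range T ⊔ ker T = ⊤ :=
  hT.orthogonal_range ▸ sup_orthogonal_of_hasOrthogonalProjection

theorem LinearMap.IsSymmetric.le_range_sup_ker {T : V →ₗ[𝕜] V} (hT : T.IsSymmetric)
    (W : Submodule 𝕜 V) [FiniteDimensional 𝕜 W] (hW : ∀ x ∈ W, T x ∈ W) :
    W ≤ range T ⊔ ker T := by
  have hsplit := (hT.restrict_invariant hW).range_sup_ker_eq_top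
  intro x hx
  obtain ⟨_, ⟨y, rfl⟩, z, hz, hyz⟩ := mem_sup.mp (hsplit.ge (mem_top : (⟨x, hx⟩ : W) ∈ ⊤))
  rw [show x = T y + z from congrArg Subtype.val hyz.symm]
  exact add_mem_sup ⟨y, rfl⟩ (congrArg Subtype.val (mem_ker.mp hz))

variable (d δ : V →ₗ[𝕜] V)

theorem inner_apply_left_of_adjoint (hadj : ∀ x y : V, inner 𝕜 (d x) y = inner 𝕜 x (δ y))
    (x y : V) : inner 𝕜 (δ x) y = inner 𝕜 x (d y) := by
  rw [← inner_conj_symm, ← hadj, inner_conj_symm]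

theorem isSymmetric_laplacian (hadj : ∀ x y : V, inner 𝕜 (d x) y = inner 𝕜 x (δ y)) :
    (d ∘ₗ δ + δ ∘ₗ d).IsSymmetric := by
  intro x y
  simp only [LinearMap.add_apply, comp_apply, inner_add_left, inner_add_right, hadj,
    inner_apply_left_of_adjoint d δ hadj]

theorem range_laplacian_le : range (d ∘ₗ δ + δ ∘ₗ d) ≤ range d ⊔ range δ := by
  rintro _ ⟨x, rfl⟩
  exact add_mem_sup ⟨δ x, rfl⟩ ⟨d x, rfl⟩

theorem re_inner_laplacian_self (hadj : ∀ x y : V, inner 𝕜 (d x) y = inner 𝕜 x (δ y)) (x : V) :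
    RCLike.re (inner 𝕜 ((d ∘ₗ δ + δ ∘ₗ d) x) x) = ‖δ x‖ ^ 2 + ‖d x‖ ^ 2 := by
  rw [LinearMap.add_apply, comp_apply, comp_apply, inner_add_left, hadj (δ x),
    inner_apply_left_of_adjoint d δ hadj (d x), map_add, inner_self_eq_norm_sq,
    inner_self_eq_norm_sq]

theorem apply_eq_zero_of_mem_ker_laplacian (hadj : ∀ x y : V, inner 𝕜 (d x) y = inner 𝕜 x (δ y))
    {x : V} (hx : x ∈ ker (d ∘ₗ δ + δ ∘ₗ d)) : d x = 0 ∧ δ x = 0 := by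
  have hsum : ‖δ x‖ ^ 2 + ‖d x‖ ^ 2 = 0 := by
    simpa [mem_ker.mp hx] using (re_inner_laplacian_self d δ hadj x).symm
  rw [add_eq_zero_iff_of_nonneg (by positivity) (by positivity)] at hsum
  simpa using hsum.symm

theorem inner_eq_zero_of_mem_ker_laplacian_of_mem_range
    (hadj : ∀ x y : V, inner 𝕜 (d x) y = inner 𝕜 x (δ y))
    {x y : V} (hx : x ∈ ker (d ∘ₗ δ + δ ∘ₗ d)) (hy : y ∈ range d) : inner 𝕜 x y = 0 := by
  obtain ⟨z, rfl⟩ := hy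
  rw [← inner_conj_symm, hadj, (apply_eq_zero_of_mem_ker_laplacian d δ hadj hx).2, inner_zero_right,
    map_zero]

theorem inner_range_range_eq_zero (hadj : ∀ x y : V, inner 𝕜 (d x) y = inner 𝕜 x (δ y))
    (hd2 : d ∘ₗ d = 0) {x y : V} (hx : x ∈ range d) (hy : y ∈ range δ) : inner 𝕜 x y = 0 := by
  obtain ⟨a, rfl⟩ := hx
  obtain ⟨b, rfl⟩ := hy
  rw [← hadj, ← comp_apply d d, hd2, LinearMap.zero_apply, inner_zero_left]

theorem le_ker_laplacian_sup_range_sup_range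
    (hadj : ∀ x y : V, inner 𝕜 (d x) y = inner 𝕜 x (δ y))
    (W : Submodule 𝕜 V) [FiniteDimensional 𝕜 W]
    (hdW : ∀ x ∈ W, d x ∈ W) (hδW : ∀ x ∈ W, δ x ∈ W) :
    W ≤ ker (d ∘ₗ δ + δ ∘ₗ d) ⊔ range d ⊔ range δ := by
  have hNW : ∀ x ∈ W, (d ∘ₗ δ + δ ∘ₗ d) x ∈ W := fun x hx =>
    W.add_mem (hdW _ (hδW x hx)) (hδW _ (hdW x hx))
  calc W ≤ range (d ∘ₗ δ + δ ∘ₗ d) ⊔ ker (d ∘ₗ δ + δ ∘ₗ d) :=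
        (isSymmetric_laplacian d δ hadj).le_range_sup_ker W hNW
    _ ≤ (range d ⊔ range δ) ⊔ ker (d ∘ₗ δ + δ ∘ₗ d) := sup_le_sup_right (range_laplacian_le d δ) _
    _ = ker (d ∘ₗ δ + δ ∘ₗ d) ⊔ range d ⊔ range δ := by rw [sup_comm, sup_assoc]

end

theorem hodge_decomposition_general
    {V : Type*} [NormedAddCommGroup V] [InnerProductSpace ℂ V]
    (d δ : V →ₗ[ℂ] V)
    (hadj : ∀ x y : V, (inner ℂ (d x) y : ℂ) = inner ℂ x (δ y))
    (hd2 : d ∘ₗ d = 0)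
    {I : Type*} (W : I → Submodule ℂ V)
    (hfin : ∀ i, FiniteDimensional ℂ (W i))
    (hdinv : ∀ i, ∀ x ∈ W i, d x ∈ W i)
    (hδinv : ∀ i, ∀ x ∈ W i, δ x ∈ W i)
    (hsup : (⨆ i, W i) = ⊤) :
    (∀ x ∈ LinearMap.ker (d ∘ₗ δ + δ ∘ₗ d), ∀ y ∈ LinearMap.range d, (inner ℂ x y : ℂ) = 0) ∧
    (∀ x ∈ LinearMap.ker (d ∘ₗ δ + δ ∘ₗ d), ∀ y ∈ LinearMap.range δ, (inner ℂ x y : ℂ) = 0) ∧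
    (∀ x ∈ LinearMap.range d, ∀ y ∈ LinearMap.range δ, (inner ℂ x y : ℂ) = 0) ∧
    LinearMap.ker (d ∘ₗ δ + δ ∘ₗ d) ⊔ LinearMap.range d ⊔ LinearMap.range δ = ⊤ := by
  have hδadj := inner_apply_left_of_adjoint d δ hadj
  refine ⟨fun x hx y hy => inner_eq_zero_of_mem_ker_laplacian_of_mem_range d δ hadj hx hy,
    fun x hx y hy => ?_, fun x hx y hy => inner_range_range_eq_zero d δ hadj hd2 hx hy, ?_⟩
  · rw [add_comm] at hx
    exact inner_eq_zero_of_mem_ker_laplacian_of_mem_range δ d hδadj hx hy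
  · refine top_unique (hsup ▸ iSup_le fun i => ?_)
    have := hfin i
    exact le_ker_laplacian_sup_range_sup_range d δ hadj (W i) (hdinv i) (hδinv i)

/-- The Hodge decomposition (Theorem 4.1, Condition 3, of the paper): if `V` is spanned by a
family of pairwise orthogonal finite-dimensional subspaces, each invariant under the mutually
adjoint operators `d` and `δ` (with `d ∘ d = 0`), then `V` is the orthogonal direct sum of the
kernel of the Laplacian `∇ = dδ + δd`, the range of `d` and the range of `δ`. -/
theorem hodge_decomposition
    {V : Type*} [NormedAddCommGroup V] [InnerProductSpace ℂ V]
    (d δ : V →ₗ[ℂ] V)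
    (hadj : ∀ x y : V, (inner ℂ (d x) y : ℂ) = inner ℂ x (δ y))
    (hd2 : d ∘ₗ d = 0)
    {I : Type*} (W : I → Submodule ℂ V)
    (hfin : ∀ i, FiniteDimensional ℂ (W i))
    (horth : ∀ i j, i ≠ j → ∀ x ∈ W i, ∀ y ∈ W j, (inner ℂ x y : ℂ) = 0)
    (hdinv : ∀ i, ∀ x ∈ W i, d x ∈ W i)
    (hδinv : ∀ i, ∀ x ∈ W i, δ x ∈ W i)
    (hsup : (⨆ i, W i) = ⊤) :
    (∀ x ∈ LinearMap.ker (d ∘ₗ δ + δ ∘ₗ d), ∀ y ∈ LinearMap.range d, (inner ℂ x y : ℂ) = 0) ∧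
    (∀ x ∈ LinearMap.ker (d ∘ₗ δ + δ ∘ₗ d), ∀ y ∈ LinearMap.range δ, (inner ℂ x y : ℂ) = 0) ∧
    (∀ x ∈ LinearMap.range d, ∀ y ∈ LinearMap.range δ, (inner ℂ x y : ℂ) = 0) ∧
    LinearMap.ker (d ∘ₗ δ + δ ∘ₗ d) ⊔ LinearMap.range d ⊔ LinearMap.range δ = ⊤ :=
  hodge_decomposition_general d δ hadj hd2 W hfin hdinv hδinv hsup
end

section
/- Let V be a complex inner product space and let d, δ : V → V be linear maps with ⟪d x, y⟫ = ⟪x, δ y⟫ for all x, y ∈ V and with d ∘ d = 0; set ∇ = d∘δ + δ∘d. Assume there is a family (W_i)_{i∈I} of finite-dimensional subspaces of V, pairwise orthogonal, each invariant under both d and δ, whose supremum is all of V. Then the orthogonal complement of range d in V equals ker δ = ker(d∘δ) = ker ∇ ⊕ range δ, and the orthogonal complement of range δ equals ker d = ker(δ∘d) = ker ∇ ⊕ range d. -/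
/-!
Positivity of the inner product alone gives `ker (δ ∘ d) = ker d`, `(range d)ᗮ = ker δ` and
`ker ∇ = ker d ⊓ ker δ`, without any completeness; in particular `range δ ⊥ ker d`.
Completeness enters only through orthogonal projections, which the finite-dimensional invariant
pieces `W i` supply: the component of `y ∈ W i` orthogonal to `d (W i) + δ (W i)` is harmonic, so
`V = ker ∇ + range d + range δ`. Intersecting with `ker δ ⊇ ker ∇ + range δ` and using the modular
law together with `ker δ ⊓ range d = ⊥` gives `ker δ = ker ∇ ⊔ range δ`. The pair `(δ, d)` is again adjoint, and
`δ ∘ δ = 0` because `range δ ⊥ ker d ⊇ range d`, so the statements for `ker d` follow by symmetry.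
-/

open Submodule LinearMap
open scoped InnerProductSpace

namespace InnerAdjoint

variable {V : Type*} [NormedAddCommGroup V] [InnerProductSpace ℂ V] {d δ : V →ₗ[ℂ] V}

theorem symm (hadj : ∀ x y : V, ⟪d x, y⟫_ℂ = ⟪x, δ y⟫_ℂ) (x y : V) :
    ⟪δ x, y⟫_ℂ = ⟪x, d y⟫_ℂ := by
  rw [← inner_conj_symm, ← hadj, inner_conj_symm]

theorem orthogonal_range_eq_ker (hadj : ∀ x y : V, ⟪d x, y⟫_ℂ = ⟪x, δ y⟫_ℂ) :
    (range d)ᗮ = ker δ := by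
  ext x
  rw [mem_orthogonal, mem_ker]
  constructor
  · intro h
    rw [← inner_self_eq_zero (𝕜 := ℂ), ← hadj]
    exact h _ (mem_range_self d (δ x))
  · rintro h _ ⟨y, rfl⟩
    rw [hadj, h, inner_zero_right]

theorem ker_comp_eq_ker (hadj : ∀ x y : V, ⟪d x, y⟫_ℂ = ⟪x, δ y⟫_ℂ) :
    ker (δ ∘ₗ d) = ker d := by
  ext x
  rw [mem_ker, mem_ker, comp_apply]
  constructor
  · intro h
    rw [← inner_self_eq_zero (𝕜 := ℂ), hadj, h, inner_zero_right]
  · intro h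
    rw [h, map_zero]

theorem range_le_orthogonal_ker (hadj : ∀ x y : V, ⟪d x, y⟫_ℂ = ⟪x, δ y⟫_ℂ) :
    range δ ≤ (ker d)ᗮ := by
  rw [← orthogonal_range_eq_ker (symm hadj)]
  exact le_orthogonal_orthogonal _

theorem comp_self_eq_zero (hadj : ∀ x y : V, ⟪d x, y⟫_ℂ = ⟪x, δ y⟫_ℂ) (hd2 : d ∘ₗ d = 0) :
    δ ∘ₗ δ = 0 := by
  rw [← range_le_ker_iff]
  calc range δ ≤ (ker d)ᗮ := range_le_orthogonal_ker hadj
    _ ≤ (range d)ᗮ := orthogonal_le (range_le_ker_iff.mpr hd2)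
    _ = ker δ := orthogonal_range_eq_ker hadj

theorem ker_add_comp_eq_inf (hadj : ∀ x y : V, ⟪d x, y⟫_ℂ = ⟪x, δ y⟫_ℂ) :
    ker (d ∘ₗ δ + δ ∘ₗ d) = ker d ⊓ ker δ := by
  refine le_antisymm (fun x hx => ?_) fun x ⟨hdx, hδx⟩ => ?_
  · have hsum : ‖δ x‖ ^ 2 + ‖d x‖ ^ 2 = 0 := by
      have h : ⟪δ x, δ x⟫_ℂ + ⟪d x, d x⟫_ℂ = ⟪x, (d ∘ₗ δ + δ ∘ₗ d) x⟫_ℂ := by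
        rw [symm hadj, hadj, LinearMap.add_apply, comp_apply, comp_apply, inner_add_right]
      rw [mem_ker.mp hx, inner_zero_right] at h
      simpa only [map_add, inner_self_eq_norm_sq, map_zero] using congrArg RCLike.re h
    obtain ⟨hδx, hdx⟩ := (add_eq_zero_iff_of_nonneg (by positivity) (by positivity)).mp hsum
    exact ⟨by simpa using hdx, by simpa using hδx⟩
  · simp_all

theorem apply_eq_zero_of_mem_orthogonal_map (hadj : ∀ x y : V, ⟪d x, y⟫_ℂ = ⟪x, δ y⟫_ℂ)
    {W : Submodule ℂ V} {q : V} (hq : q ∈ (W.map δ)ᗮ) (hdq : d q ∈ W) : d q = 0 := by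
  rw [← inner_self_eq_zero (𝕜 := ℂ), hadj]
  exact (mem_orthogonal' _ _).mp hq _ (mem_map_of_mem hdq)

theorem le_ker_inf_ker_sup_range_sup_range (hadj : ∀ x y : V, ⟪d x, y⟫_ℂ = ⟪x, δ y⟫_ℂ)
    (W : Submodule ℂ V) [FiniteDimensional ℂ W] (hdW : ∀ x ∈ W, d x ∈ W)
    (hδW : ∀ x ∈ W, δ x ∈ W) :
    W ≤ ker d ⊓ ker δ ⊔ (range d ⊔ range δ) := by
  intro y hy
  set S := W.map d ⊔ W.map δ
  have hSW : S ≤ W := sup_le (map_le_iff_le_comap.mpr hdW) (map_le_iff_le_comap.mpr hδW)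
  have : FiniteDimensional ℂ S := finiteDimensional_of_le hSW
  obtain ⟨p, hpS, q, hq, rfl⟩ := S.exists_add_mem_mem_orthogonal y
  have hqW : q ∈ W := by simpa using sub_mem hy (hSW hpS)
  have hdq : d q = 0 :=
    apply_eq_zero_of_mem_orthogonal_map hadj (orthogonal_le le_sup_right hq) (hdW q hqW)
  have hδq : δ q = 0 :=
    apply_eq_zero_of_mem_orthogonal_map (symm hadj) (orthogonal_le le_sup_left hq) (hδW q hqW)
  rw [add_comm]
  exact add_mem_sup ⟨hdq, hδq⟩ ((sup_le_sup map_le_range map_le_range : S ≤ _) hpS)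

theorem ker_inf_ker_sup_range_sup_range_eq_top (hadj : ∀ x y : V, ⟪d x, y⟫_ℂ = ⟪x, δ y⟫_ℂ)
    {I : Type*} (W : I → Submodule ℂ V) [∀ i, FiniteDimensional ℂ (W i)]
    (hdW : ∀ i, ∀ x ∈ W i, d x ∈ W i) (hδW : ∀ i, ∀ x ∈ W i, δ x ∈ W i)
    (hsup : (⨆ i, W i) = ⊤) :
    ker d ⊓ ker δ ⊔ (range d ⊔ range δ) = ⊤ :=
  eq_top_iff.mpr <| hsup ▸ iSup_le fun i =>
    le_ker_inf_ker_sup_range_sup_range hadj (W i) (hdW i) (hδW i)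

theorem ker_eq_ker_inf_ker_sup_range (hadj : ∀ x y : V, ⟪d x, y⟫_ℂ = ⟪x, δ y⟫_ℂ)
    (hδ2 : δ ∘ₗ δ = 0) (htop : ker d ⊓ ker δ ⊔ (range d ⊔ range δ) = ⊤) :
    ker δ = ker d ⊓ ker δ ⊔ range δ := by
  have hle : ker d ⊓ ker δ ⊔ range δ ≤ ker δ := sup_le inf_le_right (range_le_ker_iff.mpr hδ2)
  have hdisj : ker δ ⊓ range d = ⊥ :=
    ((orthogonal_disjoint (ker δ)).mono_right (range_le_orthogonal_ker (symm hadj))).eq_bot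
  calc ker δ = (ker d ⊓ ker δ ⊔ range δ ⊔ range d) ⊓ ker δ := by
        rw [sup_assoc, sup_comm (range δ), htop, top_inf_eq]
    _ = ker d ⊓ ker δ ⊔ range δ := by
        rw [sup_inf_assoc_of_le _ hle, inf_comm (range d), hdisj, sup_bot_eq]

theorem orthogonal_range_hodge_decomposition (hadj : ∀ x y : V, ⟪d x, y⟫_ℂ = ⟪x, δ y⟫_ℂ)
    (hδ2 : δ ∘ₗ δ = 0) (htop : ker d ⊓ ker δ ⊔ (range d ⊔ range δ) = ⊤) :
    (range d)ᗮ = ker δ ∧ ker δ = ker (d ∘ₗ δ) ∧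
      Disjoint (ker (d ∘ₗ δ + δ ∘ₗ d)) (range δ) ∧
      ker δ = ker (d ∘ₗ δ + δ ∘ₗ d) ⊔ range δ := by
  rw [ker_add_comp_eq_inf hadj]
  exact ⟨orthogonal_range_eq_ker hadj, (ker_comp_eq_ker (symm hadj)).symm,
    (orthogonal_disjoint (ker d)).mono inf_le_left (range_le_orthogonal_ker hadj),
    ker_eq_ker_inf_ker_sup_range hadj hδ2 htop⟩

end InnerAdjoint

open InnerAdjoint

theorem hodge_decomposition_orthogonal_complements_general
    {V : Type*} [NormedAddCommGroup V] [InnerProductSpace ℂ V]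
    (d δ : V →ₗ[ℂ] V)
    (hadj : ∀ x y : V, (inner ℂ (d x) y : ℂ) = inner ℂ x (δ y))
    (hd2 : d ∘ₗ d = 0)
    {I : Type*} (W : I → Submodule ℂ V)
    (hfin : ∀ i, FiniteDimensional ℂ (W i))
    (hdinv : ∀ i, ∀ x ∈ W i, d x ∈ W i)
    (hδinv : ∀ i, ∀ x ∈ W i, δ x ∈ W i)
    (hsup : (⨆ i, W i) = ⊤) :
    ((LinearMap.range d)ᗮ = LinearMap.ker δ ∧
      LinearMap.ker δ = LinearMap.ker (d ∘ₗ δ) ∧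
      Disjoint (LinearMap.ker (d ∘ₗ δ + δ ∘ₗ d)) (LinearMap.range δ) ∧
      LinearMap.ker δ = LinearMap.ker (d ∘ₗ δ + δ ∘ₗ d) ⊔ LinearMap.range δ) ∧
    ((LinearMap.range δ)ᗮ = LinearMap.ker d ∧
      LinearMap.ker d = LinearMap.ker (δ ∘ₗ d) ∧
      Disjoint (LinearMap.ker (d ∘ₗ δ + δ ∘ₗ d)) (LinearMap.range d) ∧
      LinearMap.ker d = LinearMap.ker (d ∘ₗ δ + δ ∘ₗ d) ⊔ LinearMap.range d) := by
  have htop := ker_inf_ker_sup_range_sup_range_eq_top hadj W hdinv hδinv hsup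
  refine ⟨orthogonal_range_hodge_decomposition hadj (comp_self_eq_zero hadj hd2) htop, ?_⟩
  rw [add_comm (d ∘ₗ δ)]
  exact orthogonal_range_hodge_decomposition (symm hadj) hd2
    (by rwa [inf_comm, sup_comm (range δ)])

/-- The corollary to the Hodge decomposition theorem of the paper: under the hypotheses of the
Hodge decomposition, the orthogonal complement of `range d` equals
`ker δ = ker (d ∘ δ) = ker ∇ ⊕ range δ`, and the orthogonal complement of `range δ` equals
`ker d = ker (δ ∘ d) = ker ∇ ⊕ range d`, where `∇ = dδ + δd`. -/
theorem hodge_decomposition_orthogonal_complements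
    {V : Type*} [NormedAddCommGroup V] [InnerProductSpace ℂ V]
    (d δ : V →ₗ[ℂ] V)
    (hadj : ∀ x y : V, (inner ℂ (d x) y : ℂ) = inner ℂ x (δ y))
    (hd2 : d ∘ₗ d = 0)
    {I : Type*} (W : I → Submodule ℂ V)
    (hfin : ∀ i, FiniteDimensional ℂ (W i))
    (horth : ∀ i j, i ≠ j → ∀ x ∈ W i, ∀ y ∈ W j, (inner ℂ x y : ℂ) = 0)
    (hdinv : ∀ i, ∀ x ∈ W i, d x ∈ W i)
    (hδinv : ∀ i, ∀ x ∈ W i, δ x ∈ W i)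
    (hsup : (⨆ i, W i) = ⊤) :
    ((LinearMap.range d)ᗮ = LinearMap.ker δ ∧
      LinearMap.ker δ = LinearMap.ker (d ∘ₗ δ) ∧
      Disjoint (LinearMap.ker (d ∘ₗ δ + δ ∘ₗ d)) (LinearMap.range δ) ∧
      LinearMap.ker δ = LinearMap.ker (d ∘ₗ δ + δ ∘ₗ d) ⊔ LinearMap.range δ) ∧
    ((LinearMap.range δ)ᗮ = LinearMap.ker d ∧
      LinearMap.ker d = LinearMap.ker (δ ∘ₗ d) ∧
      Disjoint (LinearMap.ker (d ∘ₗ δ + δ ∘ₗ d)) (LinearMap.range d) ∧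
      LinearMap.ker d = LinearMap.ker (d ∘ₗ δ + δ ∘ₗ d) ⊔ LinearMap.range d) :=
  hodge_decomposition_orthogonal_complements_general d δ hadj hd2 W hfin hdinv hδinv hsup
end

section
/- Fix a real number q with 0 < q < 1 and a half-integer m ≥ 0. For every half-integer k with k − m ∈ ℤ and −m ≤ k ≤ m, one has λ_k = c_k² − q²·c_{k+1}². -/
/-- `lam q k` is the quantity `λ_k = q² (q^{-4k} - 1)/(1 - q²)` (real exponents via `rpow`). -/
noncomputable def lam (q k : ℝ) : ℝ := q ^ 2 * (q ^ (-4 * k) - 1) / (1 - q ^ 2)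

/-- `cc q m k` is the quantity `c_k` of the spin-`m` representation of quantum `SU_q(2)`:
`c_k = q (1-q²)⁻¹ √((q^{-2k} - q^{2m})(q^{-2m} - q^{-2(k-1)}))` for `-m ≤ k ≤ m`, and `0`
otherwise (in particular `c_{-m-1} = c_{m+1} = 0`). -/
noncomputable def cc (q m k : ℝ) : ℝ :=
  if -m ≤ k ∧ k ≤ m then
    q / (1 - q ^ 2) *
      Real.sqrt ((q ^ (-2 * k) - q ^ (2 * m)) * (q ^ (-2 * m) - q ^ (-2 * (k - 1))))
  else 0

/-- `nu q m k` is the Laplacian eigenvalue `ν_k = c_{k+1}² + λ_k² + q² c_k²`. -/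
noncomputable def nu (q m k : ℝ) : ℝ :=
  cc q m (k + 1) ^ 2 + lam q k ^ 2 + q ^ 2 * cc q m k ^ 2

/-- `k` is a half-integer. -/
def IsHalfInt (k : ℝ) : Prop := ∃ n : ℤ, 2 * k = (n : ℝ)

/-- The identity `λ_k = c_k² - q² c_{k+1}²` used in Section 8 of the paper, for `0 < q < 1`, a
half-integer `m ≥ 0`, and a half-integer `k` with `k - m ∈ ℤ` and `-m ≤ k ≤ m`. -/
theorem lam_eq_cc_sq_sub_q_sq_mul_cc_sq
    (q : ℝ) (hq0 : 0 < q) (hq1 : q < 1)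
    (m : ℝ) (hm : IsHalfInt m) (hm0 : 0 ≤ m)
    (k : ℝ) (hk : IsHalfInt k) (hkm : ∃ n : ℤ, k - m = (n : ℝ))
    (h1 : -m ≤ k) (h2 : k ≤ m) :
    lam q k = cc q m k ^ 2 - q ^ 2 * cc q m (k + 1) ^ 2 := by
  have hq1' : q ≤ 1 := hq1.le
  have hq2 : (0:ℝ) < 1 - q ^ 2 := by nlinarith
  set x : ℝ := q ^ (-2 * k) with hxdef
  set M : ℝ := q ^ (2 * m) with hMdef
  have hx : 0 < x := Real.rpow_pos_of_pos hq0 _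
  have hM : 0 < M := Real.rpow_pos_of_pos hq0 _
  have hsq : q ^ ((2:ℝ)) = q ^ (2:ℕ) := by
    rw [← Real.rpow_natCast q 2]; norm_num
  have e2 : q ^ (-2 * m) = M⁻¹ := by
    rw [show -2 * m = -(2 * m) by ring, Real.rpow_neg hq0.le, hMdef]
  have e1 : q ^ (-2 * (k - 1)) = x * q ^ 2 := by
    rw [show -2 * (k - 1) = -2 * k + 2 by ring, Real.rpow_add hq0, hxdef, hsq]
  have e3 : q ^ (-4 * k) = x ^ 2 := by
    rw [show -4 * k = -2 * k + -2 * k by ring, Real.rpow_add hq0, hxdef, sq]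
  have e4 : q ^ (-2 * (k + 1)) = x * (q ^ 2)⁻¹ := by
    rw [show -2 * (k + 1) = -2 * k + -(2:ℝ) by ring, Real.rpow_add hq0, hxdef,
      Real.rpow_neg hq0.le, hsq]
  have e5 : q ^ (-2 * (k + 1 - 1)) = x := by rw [show -2 * (k + 1 - 1) = -2 * k by ring]
  -- nonnegativity of the product under the square root for c_k
  have mono : ∀ a b : ℝ, a ≤ b → q ^ b ≤ q ^ a := fun a b hab =>
    Real.rpow_le_rpow_of_exponent_ge hq0 hq1' hab
  have hp1 : 0 ≤ x - M := by
    have := mono (-2 * k) (2 * m) (by linarith)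
    linarith
  have hp2 : 0 ≤ M⁻¹ - x * q ^ 2 := by
    have := mono (-2 * m) (-2 * (k - 1)) (by linarith)
    rw [e1, e2] at this; linarith
  have hck : cc q m k ^ 2 = (q / (1 - q ^ 2)) ^ 2 * ((x - M) * (M⁻¹ - x * q ^ 2)) := by
    rw [cc, if_pos ⟨h1, h2⟩, mul_pow, e1, e2,
      Real.sq_sqrt (mul_nonneg hp1 hp2)]
  by_cases hkm1 : k + 1 ≤ m
  · have hp3 : 0 ≤ x * (q ^ 2)⁻¹ - M := by
      have := mono (-2 * (k + 1)) (2 * m) (by linarith)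
      rw [e4] at this; linarith
    have hp4 : 0 ≤ M⁻¹ - x := by
      have := mono (-2 * m) (-2 * k) (by linarith)
      rw [e2] at this; linarith
    have hck1 : cc q m (k + 1) ^ 2 =
        (q / (1 - q ^ 2)) ^ 2 * ((x * (q ^ 2)⁻¹ - M) * (M⁻¹ - x)) := by
      rw [cc, if_pos ⟨by linarith, hkm1⟩, mul_pow, e4, e5, e2,
        Real.sq_sqrt (mul_nonneg hp3 hp4)]
    rw [hck, hck1, lam, e3]
    field_simp
    ring
  · -- here k = m
    obtain ⟨n, hn⟩ := hkm
    have hn0 : n = 0 := by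
      have h1' : (n : ℝ) ≤ 0 := by linarith
      have h2' : (-1 : ℝ) < (n : ℝ) := by linarith
      exact_mod_cast le_antisymm (by exact_mod_cast h1') (by exact_mod_cast h2')
    have hkm' : k = m := by rw [hn0] at hn; push_cast at hn; linarith
    have hck1 : cc q m (k + 1) = 0 := by
      rw [cc, if_neg]; intro h; exact hkm1 h.2
    have hxM : x = M⁻¹ := by
      rw [hxdef, hkm', show -2 * m = -(2 * m) by ring, Real.rpow_neg hq0.le, hMdef]
    rw [hck, hck1, lam, e3, hxM]
    field_simp
    ring
end

section
/- Fix a real number q with 0 < q < 1 and a half-integer m ≥ 0, and let k be a half-integer with k − m ∈ ℤ and −m ≤ k ≤ m. Then the real symmetric 3×3 matrix T = [[−q⁷λ_k, −q⁷c_{k+1}, 0], [−q⁷c_{k+1}, q⁵, −q⁴c_k], [0, −q⁴c_k, q³λ_k]] has characteristic polynomial det(X·I − T) = X³ − B_k·X² + C_k·X, where B_k = (q³ − q⁷)·λ_k + q⁵ and C_k = −q^{10}·ν_k; moreover B_k² − 4·C_k ≥ 0, and the set of (real) eigenvalues of T is {0, (B_k + √(B_k² − 4C_k))/2, (B_k −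 √(B_k² − 4C_k))/2}. -/
/-- `Bk q k = (q³ - q⁷) λ_k + q⁵`. -/
noncomputable def Bk (q k : ℝ) : ℝ := (q ^ 3 - q ^ 7) * lam q k + q ^ 5

/-- `Ck q m k = -q¹⁰ ν_k`. -/
noncomputable def Ck (q m k : ℝ) : ℝ := -q ^ 10 * nu q m k

private lemma cc_sq (q : ℝ) (hq0 : 0 < q) (hq1 : q < 1) (m k : ℝ)
    (h1 : -m ≤ k) (h2 : k ≤ m) :
    cc q m k ^ 2 = (q / (1 - q ^ 2)) ^ 2 *
      ((q ^ (-2 * k) - q ^ (2 * m)) * (q ^ (-2 * m) - q ^ (-2 * (k - 1)))) := by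
  have hle1 : q ^ (2*m) ≤ q ^ (-2*k) :=
    (Real.rpow_le_rpow_left_iff_of_base_lt_one hq0 hq1).2 (by linarith)
  have hle2 : q ^ (-2*(k-1)) ≤ q ^ (-2*m) :=
    (Real.rpow_le_rpow_left_iff_of_base_lt_one hq0 hq1).2 (by linarith)
  rw [cc, if_pos ⟨h1, h2⟩, mul_pow, Real.sq_sqrt (mul_nonneg (by linarith) (by linarith))]

private lemma cc_sq' (q : ℝ) (hq0 : 0 < q) (hq1 : q < 1) (m k : ℝ)
    (h1 : -m ≤ k) (h2 : k ≤ m) (hkm : ∃ n : ℤ, k - m = (n : ℝ)) :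
    cc q m (k + 1) ^ 2 = (q / (1 - q ^ 2)) ^ 2 *
      ((q ^ (-2 * (k + 1)) - q ^ (2 * m)) * (q ^ (-2 * m) - q ^ (-2 * k))) := by
  rcases eq_or_lt_of_le h2 with he | hlt
  · subst he
    rw [cc, if_neg (by push_neg; intro _; linarith)]
    simp
  · have hk1 : k + 1 ≤ m := by
      obtain ⟨n, hn⟩ := hkm
      have hn0 : (n : ℝ) < 0 := by linarith
      have : n < 0 := by exact_mod_cast hn0
      have : n ≤ -1 := by omega
      have : (n : ℝ) ≤ -1 := by exact_mod_cast this
      linarith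
    have hle1 : q ^ (2*m) ≤ q ^ (-2*(k+1)) :=
      (Real.rpow_le_rpow_left_iff_of_base_lt_one hq0 hq1).2 (by linarith)
    have hle2 : q ^ (-2*((k+1)-1)) ≤ q ^ (-2*m) :=
      (Real.rpow_le_rpow_left_iff_of_base_lt_one hq0 hq1).2 (by linarith)
    rw [cc, if_pos ⟨by linarith, hk1⟩, mul_pow,
      Real.sq_sqrt (mul_nonneg (by linarith) (by linarith)),
      show (-2*((k+1)-1)) = -2*k by ring]

private lemma key (q : ℝ) (hq0 : 0 < q) (hq1 : q < 1) (m k : ℝ)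
    (h1 : -m ≤ k) (h2 : k ≤ m) (hkm : ∃ n : ℤ, k - m = (n : ℝ)) :
    cc q m k ^ 2 - q ^ 2 * cc q m (k + 1) ^ 2 = lam q k := by
  have hq2 : (0:ℝ) < 1 - q ^ 2 := by nlinarith
  rw [cc_sq q hq0 hq1 m k h1 h2, cc_sq' q hq0 hq1 m k h1 h2 hkm, lam]
  have e1 : q ^ (-2*(k-1)) = q ^ (-2*k) * q ^ 2 := by
    rw [show (-2*(k-1)) = -2*k + (2:ℕ) by push_cast; ring, Real.rpow_add hq0,
      Real.rpow_natCast]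
  have e2 : q ^ (-2*(k+1)) = q ^ (-2*k) / q ^ 2 := by
    rw [show (-2*(k+1)) = -2*k - (2:ℕ) by push_cast; ring, Real.rpow_sub hq0,
      Real.rpow_natCast]
  have e3 : q ^ (-4*k) = (q ^ (-2*k)) ^ 2 := by
    rw [← Real.rpow_natCast (q ^ (-2*k)) 2, ← Real.rpow_mul hq0.le]
    norm_num
    congr 1
    ring
  have hQ : (0:ℝ) < q ^ (2*m) := Real.rpow_pos_of_pos hq0 _
  have e4 : q ^ (-2*m) = 1 / q ^ (2*m) := by
    rw [eq_div_iff hQ.ne', ← Real.rpow_add hq0]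
    norm_num
  rw [e1, e2, e3, e4]
  have hq : q ≠ 0 := hq0.ne'
  field_simp
  ring

/-- Section 8 of the paper: on a 3-dimensional invariant block, the matrix of the operator
`T = L ∘ d` of Woronowicz's 3-dimensional calculus has characteristic polynomial
`X³ - B_k X² + C_k X`, the discriminant `B_k² - 4 C_k` is nonnegative, and the eigenvalues of
the matrix are exactly `0` and `(B_k ± √(B_k² - 4 C_k))/2`. -/
theorem charpoly_and_eigenvalues_of_T_block
    (q : ℝ) (hq0 : 0 < q) (hq1 : q < 1)
    (m : ℝ) (hm : IsHalfInt m) (hm0 : 0 ≤ m)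
    (k : ℝ) (hk : IsHalfInt k) (hkm : ∃ n : ℤ, k - m = (n : ℝ))
    (h1 : -m ≤ k) (h2 : k ≤ m) :
    let T : Matrix (Fin 3) (Fin 3) ℝ :=
      !![-(q ^ 7) * lam q k, -(q ^ 7) * cc q m (k + 1), 0;
         -(q ^ 7) * cc q m (k + 1), q ^ 5, -(q ^ 4) * cc q m k;
         0, -(q ^ 4) * cc q m k, q ^ 3 * lam q k]
    T.charpoly =
        Polynomial.X ^ 3 - Polynomial.C (Bk q k) * Polynomial.X ^ 2 +
          Polynomial.C (Ck q m k) * Polynomial.X ∧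
      0 ≤ Bk q k ^ 2 - 4 * Ck q m k ∧
      {μ : ℝ | ∃ v : Fin 3 → ℝ, v ≠ 0 ∧ T.mulVec v = μ • v} =
        {0, (Bk q k + Real.sqrt (Bk q k ^ 2 - 4 * Ck q m k)) / 2,
          (Bk q k - Real.sqrt (Bk q k ^ 2 - 4 * Ck q m k)) / 2} := by
  intro T
  have hid : cc q m k ^ 2 - q ^ 2 * cc q m (k + 1) ^ 2 = lam q k :=
    key q hq0 hq1 m k h1 h2 hkm
  have hL : lam q k = cc q m k ^ 2 - q ^ 2 * cc q m (k + 1) ^ 2 := hid.symm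
  have hdisc : 0 ≤ Bk q k ^ 2 - 4 * Ck q m k := by
    have hnu : 0 ≤ nu q m k := by rw [nu]; positivity
    have : 0 ≤ q ^ 10 := by positivity
    rw [Ck]
    nlinarith [sq_nonneg (Bk q k)]
  refine ⟨?_, hdisc, ?_⟩
  · rw [Matrix.charpoly, Matrix.det_fin_three]
    simp only [Matrix.charmatrix_apply_eq, Matrix.charmatrix_apply_ne, T,
      Matrix.cons_val', Matrix.cons_val_zero, Matrix.cons_val_one, Matrix.head_cons,
      Matrix.cons_val_two, Matrix.tail_cons, Matrix.empty_val', Matrix.cons_val_fin_one,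
      Matrix.head_fin_const, Matrix.of_apply, ne_eq, Fin.reduceEq, not_false_eq_true]
    rw [Bk, Ck, nu, hL]
    simp only [map_sub, map_mul, map_pow, map_neg, map_add, map_one, map_zero]
    ring
  · set s := Real.sqrt (Bk q k ^ 2 - 4 * Ck q m k) with hs_def
    have hs : s ^ 2 = Bk q k ^ 2 - 4 * Ck q m k := Real.sq_sqrt hdisc
    ext μ
    simp only [Set.mem_setOf_eq, Set.mem_insert_iff, Set.mem_singleton_iff]
    have hdet : (μ • (1 : Matrix (Fin 3) (Fin 3) ℝ) - T).det =
        μ * (μ - (Bk q k + s) / 2) * (μ - (Bk q k - s) / 2) := by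
      rw [Matrix.det_fin_three]
      simp only [Matrix.sub_apply, Matrix.smul_apply, Matrix.one_apply, T,
        Matrix.cons_val', Matrix.cons_val_zero, Matrix.cons_val_one, Matrix.head_cons,
        Matrix.cons_val_two, Matrix.tail_cons, Matrix.empty_val', Matrix.cons_val_fin_one,
        Matrix.head_fin_const, Matrix.of_apply, Fin.reduceEq, if_true, if_false,
        smul_eq_mul, mul_one, mul_zero, Matrix.one_apply]
      have hs' := hs
      simp only [Bk, Ck, nu, hL] at hs' ⊢
      linear_combination (μ / 4) * hs'
    constructor
    · rintro ⟨v, hv, hTv⟩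
      have h0 : (μ • (1 : Matrix (Fin 3) (Fin 3) ℝ) - T).mulVec v = 0 := by
        rw [Matrix.sub_mulVec, Matrix.smul_mulVec, Matrix.one_mulVec, hTv, sub_self]
      have hd0 : (μ • (1 : Matrix (Fin 3) (Fin 3) ℝ) - T).det = 0 :=
        Matrix.exists_mulVec_eq_zero_iff.mp ⟨v, hv, h0⟩
      rw [hdet] at hd0
      rcases mul_eq_zero.mp hd0 with h | h
      · rcases mul_eq_zero.mp h with h | h
        · exact Or.inl h
        · exact Or.inr (Or.inl (by linarith [sub_eq_zero.mp h]))
      · exact Or.inr (Or.inr (by linarith [sub_eq_zero.mp h]))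
    · intro hμ
      have hd0 : (μ • (1 : Matrix (Fin 3) (Fin 3) ℝ) - T).det = 0 := by
        rw [hdet]
        rcases hμ with h | h | h
        · rw [h]; ring
        · rw [h]; ring_nf
        · rw [h]; ring_nf
      obtain ⟨v, hv, h0⟩ := Matrix.exists_mulVec_eq_zero_iff.mpr hd0
      refine ⟨v, hv, ?_⟩
      have := h0
      rw [Matrix.sub_mulVec, Matrix.smul_mulVec, Matrix.one_mulVec, sub_eq_zero] at this
      exact this.symm
end

section
/- Fix a real number q with 0 < q < 1. For every nonzero half-integer k: λ_k² ≥ q⁴, and q^{−8k} ≤ λ_k²·(2 − q²)²/q⁴; consequently λ_k² ≥ q⁴·(2 − q²)^{−2}·max(q^{−8k}, 1). -/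
/-!
Write `a = q²` and `t = q^{-4k} = a^{-2k}`, so that `λ_k = a (t - 1)/(1 - a)`. As `2k` is a nonzero
integer and `0 < a < 1`, `t` stays away from `1`: either `t ≤ a` or `t ≥ a⁻¹`. In both cases
`|t - 1| ≥ 1 - a`, which gives `λ_k² ≥ a²`, and `t (1 - a) ≤ |t - 1| (2 - a)`, which gives the
second bound. The third follows from the first two since `(2 - a)² ≥ 1`.
-/

lemma zpow_le_self_or_inv_le_zpow {a : ℝ} (ha0 : 0 < a) (ha1 : a ≤ 1) {m : ℤ} (hm : m ≠ 0) :
    a ^ m ≤ a ∨ a⁻¹ ≤ a ^ m := by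
  rcases hm.lt_or_gt with hm | hm
  · right
    rw [← zpow_neg_one]
    exact zpow_le_zpow_right_of_le_one₀ ha0 ha1 (by omega)
  · left
    simpa using zpow_le_zpow_right_of_le_one₀ ha0 ha1 (show (1 : ℤ) ≤ m by omega)

lemma rpow_neg_four_mul_eq_zpow (q : ℝ) {k : ℝ} {n : ℤ} (hn : 2 * k = n) :
    q ^ (-4 * k) = (q ^ 2) ^ (-n) := by
  rw [← zpow_natCast, ← zpow_mul, ← Real.rpow_intCast]
  congr 1
  push_cast
  linarith

section

variable {a t : ℝ}

lemma one_sub_le_abs_sub_one (ha0 : 0 < a) (ha1 : a < 1) (ht : t ≤ a ∨ a⁻¹ ≤ t) :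
    1 - a ≤ |t - 1| := by
  rcases ht with ht | ht
  · rw [abs_sub_comm]
    exact (by linarith : 1 - a ≤ 1 - t).trans (le_abs_self _)
  · rw [inv_le_iff_one_le_mul₀' ha0] at ht
    refine le_trans ?_ (le_abs_self _)
    nlinarith

lemma mul_one_sub_le_abs_sub_one_mul (ha0 : 0 < a) (ha1 : a < 1) (ht : t ≤ a ∨ a⁻¹ ≤ t) :
    t * (1 - a) ≤ |t - 1| * (2 - a) := by
  rcases ht with ht | ht
  · rw [abs_sub_comm]
    refine le_trans ?_ (mul_le_mul_of_nonneg_right (le_abs_self _) (by linarith))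
    nlinarith
  · rw [inv_le_iff_one_le_mul₀' ha0] at ht
    refine le_trans ?_ (mul_le_mul_of_nonneg_right (le_abs_self _) (by linarith))
    nlinarith

lemma abs_mul_sub_one_div_one_sub (ha0 : 0 < a) (ha1 : a < 1) :
    |a * (t - 1) / (1 - a)| = a * |t - 1| / (1 - a) := by
  rw [abs_div, abs_mul, abs_of_pos ha0, abs_of_pos (sub_pos.mpr ha1)]

lemma sq_le_sq_mul_sub_one_div_one_sub (ha0 : 0 < a) (ha1 : a < 1) (ht : t ≤ a ∨ a⁻¹ ≤ t) :
    a ^ 2 ≤ (a * (t - 1) / (1 - a)) ^ 2 := by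
  rw [sq_le_sq, abs_mul_sub_one_div_one_sub ha0 ha1, abs_of_pos ha0,
    le_div_iff₀ (sub_pos.mpr ha1)]
  exact mul_le_mul_of_nonneg_left (one_sub_le_abs_sub_one ha0 ha1 ht) ha0.le

lemma sq_le_sq_mul_sub_one_div_one_sub_mul (ha0 : 0 < a) (ha1 : a < 1) (ht0 : 0 ≤ t)
    (ht : t ≤ a ∨ a⁻¹ ≤ t) :
    t ^ 2 ≤ (a * (t - 1) / (1 - a)) ^ 2 * (2 - a) ^ 2 / a ^ 2 := by
  have key : t ≤ |a * (t - 1) / (1 - a)| * (2 - a) / a := by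
    rw [abs_mul_sub_one_div_one_sub ha0 ha1, le_div_iff₀ ha0, div_mul_eq_mul_div,
      le_div_iff₀ (sub_pos.mpr ha1)]
    nlinarith [mul_one_sub_le_abs_sub_one_mul ha0 ha1 ht]
  calc t ^ 2 ≤ (|a * (t - 1) / (1 - a)| * (2 - a) / a) ^ 2 := pow_le_pow_left₀ ht0 key 2
    _ = (a * (t - 1) / (1 - a)) ^ 2 * (2 - a) ^ 2 / a ^ 2 := by rw [div_pow, mul_pow, sq_abs]

end

lemma mul_inv_mul_max_le {c d x y : ℝ} (hc : 0 < c) (hd : 1 ≤ d) (hcy : c ≤ y)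
    (hxy : x ≤ y * d / c) : c * d⁻¹ * max x 1 ≤ y := by
  have hd0 : 0 < d := one_pos.trans_le hd
  rw [mul_assoc, ← le_div_iff₀' hc, inv_mul_le_iff₀ hd0]
  refine max_le ?_ ?_
  · rwa [mul_div_assoc', mul_comm d]
  · exact one_le_mul_of_one_le_of_one_le hd ((one_le_div hc).mpr hcy)

/-- The bounds on `λ_k` from the proof of Theorem 8.2 of the paper: for `0 < q < 1` and every
nonzero half-integer `k`, `λ_k² ≥ q⁴`, `q^{-8k} ≤ λ_k² (2 - q²)²/q⁴`, and consequently
`λ_k² ≥ q⁴ (2 - q²)⁻² max(q^{-8k}, 1)`. -/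
theorem lam_sq_lower_bounds
    (q : ℝ) (hq0 : 0 < q) (hq1 : q < 1)
    (k : ℝ) (hk : IsHalfInt k) (hk0 : k ≠ 0) :
    q ^ 4 ≤ lam q k ^ 2 ∧
    q ^ (-8 * k) ≤ lam q k ^ 2 * (2 - q ^ 2) ^ 2 / q ^ 4 ∧
    q ^ 4 * ((2 - q ^ 2) ^ 2)⁻¹ * max (q ^ (-8 * k)) 1 ≤ lam q k ^ 2 := by
  obtain ⟨n, hn⟩ := hk
  have hn0 : -n ≠ 0 := neg_ne_zero.mpr (by rintro rfl; simp_all)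
  have ha0 : 0 < q ^ 2 := by positivity
  have ha1 : q ^ 2 < 1 := pow_lt_one₀ hq0.le hq1 two_ne_zero
  have hpow := rpow_neg_four_mul_eq_zpow q hn
  have hsplit := zpow_le_self_or_inv_le_zpow ha0 ha1.le hn0
  have hsq : q ^ (-8 * k) = (q ^ (-4 * k)) ^ 2 := by
    rw [← Real.rpow_natCast, ← Real.rpow_mul hq0.le]
    ring_nf
  have hq4 : q ^ 4 = (q ^ 2) ^ 2 := by ring
  have hlam : lam q k = q ^ 2 * ((q ^ 2) ^ (-n) - 1) / (1 - q ^ 2) := by rw [lam, hpow]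
  have h1 : q ^ 4 ≤ lam q k ^ 2 := by
    rw [hq4, hlam]
    exact sq_le_sq_mul_sub_one_div_one_sub ha0 ha1 hsplit
  have h2 : q ^ (-8 * k) ≤ lam q k ^ 2 * (2 - q ^ 2) ^ 2 / q ^ 4 := by
    rw [hsq, hpow, hq4, hlam]
    exact sq_le_sq_mul_sub_one_div_one_sub_mul ha0 ha1 (by positivity) hsplit
  exact ⟨h1, h2, mul_inv_mul_max_le (by positivity) (one_le_pow₀ (by linarith)) h1 h2⟩
end

section
/- Fix a real number q with 0 < q < 1 and a half-integer m ≥ 1/2. For every half-integer k with k − m ∈ ℤ and −m ≤ k ≤ m, one has ν_k ≥ q⁴·(2 − q²)^{−2}·max(q^{−8k}, 1). -/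
set_option maxHeartbeats 1600000 in
/-- The lower bound `ν_k ≥ q⁴ (2 - q²)⁻² max(q^{-8k}, 1)` from the proof of Theorem 8.2 of the
paper, for `0 < q < 1`, a half-integer `m ≥ 1/2`, and a half-integer `k` with `k - m ∈ ℤ` and
`-m ≤ k ≤ m`. -/
theorem nu_lower_bound
    (q : ℝ) (hq0 : 0 < q) (hq1 : q < 1)
    (m : ℝ) (hm : IsHalfInt m) (hm0 : 1 / 2 ≤ m)
    (k : ℝ) (hk : IsHalfInt k) (hkm : ∃ n : ℤ, k - m = (n : ℝ))
    (h1 : -m ≤ k) (h2 : k ≤ m) :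
    q ^ 4 * ((2 - q ^ 2) ^ 2)⁻¹ * max (q ^ (-8 * k)) 1 ≤ nu q m k := by
  have hq2 : (0:ℝ) < 1 - q ^ 2 := by nlinarith
  have hq2' : (0:ℝ) < q ^ 2 := by positivity
  have hinv : ((2 - q ^ 2) ^ 2)⁻¹ ≤ 1 := inv_le_one_of_one_le₀ (by nlinarith)
  have hlamle : lam q k ^ 2 ≤ nu q m k := by
    unfold nu
    nlinarith [sq_nonneg (cc q m (k+1)), sq_nonneg (cc q m k),
      mul_nonneg hq2'.le (sq_nonneg (cc q m k))]
  have hr2 : q ^ ((2:ℝ)) = q ^ 2 := by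
    rw [show (2:ℝ) = ((2:ℕ):ℝ) by norm_num, Real.rpow_natCast]
  obtain ⟨n, hn⟩ := hk
  rcases lt_trichotomy n 0 with hneg | hzero | hpos
  · -- k ≤ -1/2
    have hn1 : (n:ℝ) ≤ -1 := by exact_mod_cast (by omega : n ≤ -1)
    have hk2 : k ≤ -(1/2) := by linarith [hn, hn1]
    have hmax : max (q ^ (-8 * k)) 1 = 1 :=
      max_eq_right (Real.rpow_le_one hq0.le hq1.le (by linarith))
    rw [hmax, mul_one]
    have hA : q ^ (-4 * k) ≤ q ^ 2 := by
      rw [← hr2]; exact Real.rpow_le_rpow_of_exponent_ge hq0 hq1.le (by linarith)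
    have hA0 : (0:ℝ) < q ^ (-4 * k) := Real.rpow_pos_of_pos hq0 _
    have hlam : lam q k ≤ -q ^ 2 := by
      unfold lam
      rw [div_le_iff₀ hq2]
      nlinarith
    have hq4 : q ^ 4 ≤ lam q k ^ 2 := by nlinarith
    calc q ^ 4 * ((2 - q ^ 2) ^ 2)⁻¹ ≤ q ^ 4 * 1 :=
          mul_le_mul_of_nonneg_left hinv (by positivity)
      _ ≤ lam q k ^ 2 := by nlinarith
      _ ≤ nu q m k := hlamle
  · -- k = 0
    have hk0 : k = 0 := by
      have : (2:ℝ) * k = 0 := by rw [hn, hzero]; norm_num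
      linarith
    subst hk0
    have hmax : max (q ^ (-8 * (0:ℝ))) 1 = 1 := by
      rw [show (-8 : ℝ) * 0 = 0 by ring, Real.rpow_zero, max_self]
    rw [hmax, mul_one]
    obtain ⟨j, hj⟩ := hkm
    have hm1 : 1 ≤ m := by
      have hj0 : (j:ℝ) < 0 := by linarith
      have hj1 : j ≤ -1 := by
        have : j < 0 := by exact_mod_cast hj0
        omega
      have : (j:ℝ) ≤ -1 := by exact_mod_cast hj1
      linarith
    have hcond : -m ≤ (0:ℝ) + 1 ∧ (0:ℝ) + 1 ≤ m := ⟨by linarith, by linarith⟩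
    have hccle : cc q m (0 + 1) ^ 2 ≤ nu q m 0 := by
      unfold nu
      nlinarith [sq_nonneg (lam q 0), sq_nonneg (cc q m 0),
        mul_nonneg hq2'.le (sq_nonneg (cc q m 0))]
    have key : (1:ℝ) ≤ cc q m (0 + 1) ^ 2 := by
      rw [cc, if_pos hcond]
      have e1 : (-2 : ℝ) * ((0:ℝ) + 1) = -2 := by ring
      have e2 : (-2 : ℝ) * (((0:ℝ) + 1) - 1) = 0 := by ring
      rw [e1, e2, Real.rpow_zero]
      have hqinv : q ^ (-2 : ℝ) = (q ^ 2)⁻¹ := by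
        rw [← hr2, ← Real.rpow_neg hq0.le]
      have hu : q ^ 2 * (q ^ 2)⁻¹ = 1 := mul_inv_cancel₀ (ne_of_gt hq2')
      have h2m : q ^ (2 * m) ≤ q ^ 2 := by
        rw [← hr2]
        exact Real.rpow_le_rpow_of_exponent_ge hq0 hq1.le (by linarith)
      have h2m' : (q ^ 2)⁻¹ ≤ q ^ (-2 * m) := by
        rw [← hqinv]
        exact Real.rpow_le_rpow_of_exponent_ge hq0 hq1.le (by linarith)
      have ha0 : (0:ℝ) < q ^ (2 * m) := Real.rpow_pos_of_pos hq0 _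
      have hu1 : (1:ℝ) ≤ (q ^ 2)⁻¹ := by nlinarith
      have hu2 : 2 - q ^ 2 ≤ (q ^ 2)⁻¹ := by nlinarith [sq_nonneg (1 - q ^ 2)]
      have hfa : (0:ℝ) ≤ q ^ (-2:ℝ) - q ^ (2 * m) := by rw [hqinv]; nlinarith
      have hfb : (0:ℝ) ≤ q ^ (-2 * m) - 1 := by linarith
      have hprod : (0:ℝ) ≤ (q ^ (-2:ℝ) - q ^ (2 * m)) * (q ^ (-2 * m) - 1) :=
        mul_nonneg hfa hfb
      rw [mul_pow, Real.sq_sqrt hprod, hqinv, div_pow, div_mul_eq_mul_div,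
        le_div_iff₀ (by positivity), one_mul]
      nlinarith [mul_nonneg (by nlinarith : (0:ℝ) ≤ q ^ 2 - q ^ (2 * m)) hfb,
        mul_nonneg (by nlinarith : (0:ℝ) ≤ (q ^ 2)⁻¹ - q ^ 2)
          (by nlinarith : (0:ℝ) ≤ q ^ (-2 * m) - (q ^ 2)⁻¹),
        hu, hu2, hq2']
    calc q ^ 4 * ((2 - q ^ 2) ^ 2)⁻¹ ≤ q ^ 4 * 1 :=
          mul_le_mul_of_nonneg_left hinv (by positivity)
      _ ≤ 1 := by nlinarith
      _ ≤ cc q m (0 + 1) ^ 2 := key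
      _ ≤ nu q m 0 := hccle
  · -- k ≥ 1/2
    have hn1 : (1:ℝ) ≤ (n:ℝ) := by exact_mod_cast hpos
    have hk2 : (1:ℝ)/2 ≤ k := by linarith [hn, hn1]
    have hone : (1:ℝ) ≤ q ^ (-8 * k) :=
      Real.one_le_rpow_of_pos_of_le_one_of_nonpos hq0 hq1.le (by linarith)
    have hmax : max (q ^ (-8 * k)) 1 = q ^ (-8 * k) := max_eq_left hone
    rw [hmax]
    have hA0 : (0:ℝ) < q ^ (-4 * k) := Real.rpow_pos_of_pos hq0 _
    have h1' : (1:ℝ) ≤ q ^ (-4 * k) * q ^ 2 := by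
      have : q ^ (-4 * k) * q ^ 2 = q ^ (-4 * k + 2) := by
        rw [← hr2, ← Real.rpow_add hq0]
      rw [this]
      exact Real.one_le_rpow_of_pos_of_le_one_of_nonpos hq0 hq1.le (by linarith)
    have hlam : q ^ 2 * q ^ (-4 * k) ≤ lam q k := by
      unfold lam
      rw [le_div_iff₀ hq2]
      nlinarith
    have hsq : q ^ (-8 * k) = (q ^ (-4 * k)) ^ 2 := by
      rw [show (-8:ℝ) * k = (-4 * k) * 2 by ring, Real.rpow_mul hq0.le, Real.rpow_two]
    have hlamsq : q ^ 4 * q ^ (-8 * k) ≤ lam q k ^ 2 := by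
      have hl0 : (0:ℝ) ≤ q ^ 2 * q ^ (-4 * k) := by positivity
      have := mul_self_le_mul_self hl0 hlam
      rw [hsq]
      nlinarith
    calc q ^ 4 * ((2 - q ^ 2) ^ 2)⁻¹ * q ^ (-8 * k)
        ≤ q ^ 4 * 1 * q ^ (-8 * k) := by
          apply mul_le_mul_of_nonneg_right _ (by positivity)
          exact mul_le_mul_of_nonneg_left hinv (by positivity)
      _ = q ^ 4 * q ^ (-8 * k) := by ring
      _ ≤ lam q k ^ 2 := hlamsq
      _ ≤ nu q m k := hlamle
end

section
/- Fix a real number q with 0 < q < 1. There exists a constant C > 0, depending only on q, such that for every half-integer m ≥ 1 and every half-integer k with k − m ∈ ℤ and −m + 1 ≤ k ≤ m − 1, both numbers μ₊ = (B_k + √(B_k² − 4C_k))/2 and μ₋ = (B_k − √(B_k² − 4C_k))/2 satisfy μ₊² ≥ C·max(q^{−8k}, 1) and μ₋² ≥ C·max(q^{−8k}, 1). -/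
set_option maxHeartbeats 4000000 in
/-- The estimates from Theorem 8.2 of the paper: there is a constant `C > 0` depending only on
`q` such that for every half-integer `m ≥ 1` and every half-integer `k` with `k - m ∈ ℤ` and
`-m + 1 ≤ k ≤ m - 1`, both eigenvalues `μ₊ = (B_k + √(B_k² - 4C_k))/2` and
`μ₋ = (B_k - √(B_k² - 4C_k))/2` satisfy `μ² ≥ C max(q^{-8k}, 1)`. -/
theorem eigenvalue_square_lower_bound
    (q : ℝ) (hq0 : 0 < q) (hq1 : q < 1) :
    ∃ C : ℝ, 0 < C ∧
      ∀ m : ℝ, IsHalfInt m → 1 ≤ m →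
        ∀ k : ℝ, IsHalfInt k → (∃ n : ℤ, k - m = (n : ℝ)) →
          -m + 1 ≤ k → k ≤ m - 1 →
            C * max (q ^ (-8 * k)) 1 ≤
                ((Bk q k + Real.sqrt (Bk q k ^ 2 - 4 * Ck q m k)) / 2) ^ 2 ∧
              C * max (q ^ (-8 * k)) 1 ≤
                ((Bk q k - Real.sqrt (Bk q k ^ 2 - 4 * Ck q m k)) / 2) ^ 2 := by
  have hq2 : (0:ℝ) < q^2 := by positivity
  have hq21 : q^2 < 1 := by nlinarith
  have hQ : (0:ℝ) < 1 - q^2 := by linarith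
  have hsqle : ∀ x : ℝ, x ≤ -q^2 → q^4 ≤ x^2 := by
    intro x hx; nlinarith
  have habs : ∀ x y : ℝ, 0 ≤ x → 0 ≤ y → x^2 ≤ y^2 → x ≤ y := by
    intro x y hx hy h; nlinarith
  have hinv : 1 < (q^2)⁻¹ := by
    nlinarith [mul_pos (inv_pos.mpr hq2) hQ, mul_inv_cancel₀ hq2.ne']
  set c0 : ℝ := q^2/(1-q^2)^2 * (((q^2)⁻¹ - q^2) * ((q^2)⁻¹ - 1)) with hc0def
  clear_value c0
  have hc0 : 0 < c0 := by
    rw [hc0def]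
    apply mul_pos (by positivity)
    apply mul_pos <;> linarith
  set cq : ℝ := min (q^4) c0 with hcqdef
  clear_value cq
  have hcq : 0 < cq := by rw [hcqdef]; exact lt_min (by positivity) hc0
  have hcq4 : cq ≤ q^4 := by rw [hcqdef]; exact min_le_left _ _
  have hcqc0 : cq ≤ c0 := by rw [hcqdef]; exact min_le_right _ _
  set b : ℝ := q^5*(2+q^2) with hbdef
  clear_value b
  have hb : 0 < b := by rw [hbdef]; positivity
  set a : ℝ := q^10*cq/b with hadef
  clear_value a
  have ha : 0 < a := by rw [hadef]; positivity
  refine ⟨min (q^10*cq) (a^2) / 4, by positivity, ?_⟩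
  intro m hm hm1 k hk hkm hklb hkub
  -- trichotomy for half-integers
  have hcase : k ≤ -(1/2) ∨ k = 0 ∨ (1/2) ≤ k := by
    obtain ⟨n, hn⟩ := hk
    rcases lt_trichotomy k 0 with h | h | h
    · left
      have hn0 : n < 0 := by exact_mod_cast show (n:ℝ) < 0 by linarith
      have hn1 : (n:ℝ) ≤ -1 := by exact_mod_cast (by omega : n ≤ -1)
      linarith
    · right; left; exact h
    · right; right
      have hn0 : 0 < n := by exact_mod_cast show (0:ℝ) < (n:ℝ) by linarith
      have hn1 : (1:ℝ) ≤ (n:ℝ) := by exact_mod_cast (by omega : 1 ≤ n)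
      linarith
  set P := q ^ (-4*k) with hPdef
  clear_value P
  have hP0 : 0 < P := by rw [hPdef]; exact Real.rpow_pos_of_pos hq0 _
  set M := max P 1 with hMdef
  clear_value M
  have hM1 : 1 ≤ M := by rw [hMdef]; exact le_max_right _ _
  have hM0 : 0 < M := by linarith
  have hPM : P ≤ M := by rw [hMdef]; exact le_max_left _ _
  have hlam : lam q k = q^2*(P-1)/(1-q^2) := by rw [lam, hPdef]
  -- bounds on B
  have hlam_ub : lam q k ≤ q^2*M/(1-q^2) := by
    rw [hlam, div_le_div_iff₀ hQ hQ]; nlinarith [hPM, mul_pos hq2 hQ]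
  have hlam_lb : -(q^2/(1-q^2)) ≤ lam q k := by
    have he : -(q^2/(1-q^2)) = q^2*(0-1)/(1-q^2) := by ring
    rw [hlam, he, div_le_div_iff₀ hQ hQ]
    nlinarith [hP0, mul_pos hq2 hQ]
  have hq37 : (0:ℝ) ≤ q^3 - q^7 :=
    sub_nonneg.mpr (pow_le_pow_of_le_one hq0.le hq1.le (by norm_num))
  have hnl : lam q k ^ 2 ≤ nu q m k := by
    rw [nu]
    linarith [sq_nonneg (cc q m (k+1)),
      mul_nonneg (sq_nonneg q) (sq_nonneg (cc q m k))]
  have hmain : cq * M^2 ≤ nu q m k ∧ (lam q k < 0 → lam q k ≤ -q^2) := by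
    rcases hcase with hc | hc | hc
    · -- k ≤ -1/2
      have hPle : P ≤ q^2 := by
        rw [hPdef]
        have h2 := Real.rpow_le_rpow_of_exponent_ge hq0 hq1.le
          (show ((2:ℕ):ℝ) ≤ -4*k by push_cast; linarith)
        rwa [Real.rpow_natCast] at h2
      have hlamle : lam q k ≤ -q^2 := by
        rw [hlam, div_le_iff₀ hQ]; nlinarith [hPle, hq2]
      have hMeq : M = 1 := by rw [hMdef]; exact max_eq_right (by linarith)
      refine ⟨?_, fun _ => hlamle⟩
      rw [hMeq, one_pow, mul_one]
      have h4 : q^4 ≤ lam q k ^ 2 := hsqle _ hlamle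
      linarith
    · -- k = 0
      subst hc
      have hP1 : P = 1 := by rw [hPdef, show (-4*(0:ℝ)) = 0 by ring, Real.rpow_zero]
      have hMeq : M = 1 := by rw [hMdef, hP1, max_self]
      have hlam0 : lam q 0 = 0 := by
        rw [lam, show (-4*(0:ℝ)) = 0 by ring, Real.rpow_zero]; ring
      have hccsq : c0 ≤ cc q m 1 ^ 2 := by
        rw [cc, if_pos ⟨by linarith, hm1⟩]
        have e1 : q ^ (-2*(1:ℝ)) = (q^2)⁻¹ := by
          rw [show (-2*(1:ℝ)) = -((2:ℕ):ℝ) by norm_num, Real.rpow_neg hq0.le,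
            Real.rpow_natCast]
        have e2 : q ^ (-2*((1:ℝ)-1)) = 1 := by
          rw [show (-2*((1:ℝ)-1)) = 0 by ring, Real.rpow_zero]
        have h2m : q ^ (2*m) ≤ q^2 := by
          have h := Real.rpow_le_rpow_of_exponent_ge hq0 hq1.le
            (show ((2:ℕ):ℝ) ≤ 2*m by push_cast; linarith)
          rwa [Real.rpow_natCast] at h
        have hm2 : (q^2)⁻¹ ≤ q ^ (-2*m) := by
          have h := Real.rpow_le_rpow_of_exponent_ge hq0 hq1.le
            (show -2*m ≤ -((2:ℕ):ℝ) by push_cast; linarith)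
          rwa [Real.rpow_neg hq0.le, Real.rpow_natCast] at h
        rw [e1, e2]
        have hf1 : 0 < (q^2)⁻¹ - q^2 := by linarith
        have hf2 : 0 < (q^2)⁻¹ - 1 := by linarith
        have hprod : 0 ≤ ((q^2)⁻¹ - q ^ (2*m)) * (q ^ (-2*m) - 1) := by
          apply mul_nonneg <;> linarith
        rw [mul_pow, div_pow, Real.sq_sqrt hprod]
        have hmono : ((q^2)⁻¹ - q^2) * ((q^2)⁻¹ - 1)
            ≤ ((q^2)⁻¹ - q ^ (2*m)) * (q ^ (-2*m) - 1) := by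
          apply mul_le_mul (by linarith) (by linarith) (by linarith) (by linarith)
        have hco : (0:ℝ) < q^2/(1-q^2)^2 := by positivity
        rw [hc0def]
        exact mul_le_mul_of_nonneg_left hmono hco.le
      refine ⟨?_, fun h => by rw [hlam0] at h; linarith⟩
      rw [hMeq, one_pow, mul_one]
      have h1 : cc q m 1 ^ 2 ≤ nu q m 0 := by
        rw [nu, show (0:ℝ)+1 = 1 by norm_num]
        linarith [sq_nonneg (lam q 0),
          mul_nonneg (sq_nonneg q) (sq_nonneg (cc q m 0))]
      linarith [hcqc0]
    · -- 1/2 ≤ k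
      have hq2P : 1 ≤ q^2 * P := by
        have he : q^2 * P = q ^ (((2:ℕ):ℝ) + (-4*k)) := by
          rw [hPdef, Real.rpow_add hq0, Real.rpow_natCast]
        have h0 := Real.rpow_le_rpow_of_exponent_ge hq0 hq1.le
          (show ((2:ℕ):ℝ) + (-4*k) ≤ 0 by push_cast; linarith)
        rw [Real.rpow_zero] at h0
        rw [he]; exact h0
      have hlamge : q^2 * P ≤ lam q k := by
        rw [hlam, le_div_iff₀ hQ]; nlinarith [hq2P, hq2]
      have hP1 : 1 ≤ P := by nlinarith [hq2P, hq2, hP0, hq21]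
      have hMeq : M = P := by rw [hMdef]; exact max_eq_left hP1
      refine ⟨?_, fun h => by linarith [hlamge, mul_pos hq2 hP0]⟩
      rw [hMeq]
      have h1 : (q^2*P)^2 ≤ lam q k ^ 2 :=
        pow_le_pow_left₀ (mul_pos hq2 hP0).le hlamge 2
      have h2 := mul_le_mul_of_nonneg_right hcq4 (sq_nonneg P)
      have h3 : (q^2*P)^2 = q^4*P^2 := by ring
      linarith
  obtain ⟨hnu, hlamneg⟩ := hmain
  have hnu0 : 0 < nu q m k := lt_of_lt_of_le (by positivity) hnu
  set ν := nu q m k with hνdef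
  clear_value ν
  set s := q^5 * Real.sqrt ν with hsdef
  clear_value s
  have hs0 : 0 < s := by
    rw [hsdef]
    exact mul_pos (by positivity) (Real.sqrt_pos.mpr hnu0)
  have hs2 : s^2 = q^10*ν := by
    rw [hsdef, mul_pow, Real.sq_sqrt hnu0.le]; ring
  have hslb : q^10*cq*M^2 ≤ s^2 := by
    rw [hs2]
    have := mul_le_mul_of_nonneg_left hnu (show (0:ℝ) ≤ q^10 by positivity)
    linarith
  set B := Bk q k with hBdef
  clear_value B
  have hD : B^2 - 4*Ck q m k = B^2 + 4*s^2 := by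
    rw [Ck, ← hνdef, hs2]; ring
  rw [hD]
  set u := Real.sqrt (B^2 + 4*s^2) with hudef
  clear_value u
  have hDpos : (0:ℝ) ≤ B^2 + 4*s^2 := by positivity
  have hu2 : u^2 = B^2 + 4*s^2 := by rw [hudef]; exact Real.sq_sqrt hDpos
  have hu0 : 0 ≤ u := by rw [hudef]; exact Real.sqrt_nonneg _
  have hu2s : 2*s ≤ u := by
    have h := Real.sqrt_le_sqrt (show (2*s)^2 ≤ B^2 + 4*s^2 by linarith [sq_nonneg B])
    rw [Real.sqrt_sq (by linarith)] at h
    rw [hudef]; exact h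
  have hBub : B ≤ b*M := by
    rw [hBdef, Bk, hbdef]
    have h1 : (q^3-q^7)*lam q k ≤ (q^3-q^7)*(q^2*M/(1-q^2)) :=
      mul_le_mul_of_nonneg_left hlam_ub hq37
    have h2 : (q^3-q^7)*(q^2*M/(1-q^2)) = q^5*(1+q^2)*M := by
      field_simp; ring
    have h3 : q^5 ≤ q^5*M := le_mul_of_one_le_right (pow_pos hq0 5).le hM1
    linarith
  have hBq7 : -(q^7) ≤ B ∨ 0 ≤ B := by
    rcases le_or_gt 0 (lam q k) with h | h
    · right; rw [hBdef, Bk]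
      linarith [mul_nonneg hq37 h, pow_pos hq0 5]
    · left
      rw [hBdef, Bk]
      have h1 : (q^3-q^7)*(-(q^2/(1-q^2))) ≤ (q^3-q^7)*lam q k :=
        mul_le_mul_of_nonneg_left hlam_lb hq37
      have h2 : (q^3-q^7)*(q^2/(1-q^2)) = q^5*(1+q^2) := by field_simp; ring
      linarith
  have hBlb : -s ≤ B := by
    rcases le_or_gt 0 B with h | h
    · linarith
    · have hlneg : lam q k < 0 := by
        by_contra hcon; push_neg at hcon
        rw [hBdef, Bk] at h
        linarith [mul_nonneg hq37 hcon, pow_pos hq0 5]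
      have hl2 : lam q k ≤ -q^2 := hlamneg hlneg
      have hν4 : q^4 ≤ ν := le_trans (hsqle _ hl2) hnl
      have hs7 : q^7 ≤ s := by
        apply habs _ _ (by positivity) hs0.le
        rw [hs2]
        have := mul_le_mul_of_nonneg_left hν4 (show (0:ℝ) ≤ q^10 by positivity)
        have he : (q^7)^2 = q^10*q^4 := by ring
        linarith
      rcases hBq7 with h7 | h7 <;> linarith
  -- rewrite the max as M^2
  have hM2 : max (q ^ (-8*k)) 1 = M^2 := by
    have h8 : q ^ (-8*k) = P^2 := by
      rw [hPdef, show (-8*k) = (-4*k)*((2:ℕ):ℝ) by push_cast; ring,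
        Real.rpow_mul hq0.le, Real.rpow_natCast]
    rw [h8, hMdef]
    rcases le_total P 1 with h | h
    · have h2 : P^2 ≤ 1 := by
        rw [pow_two]
        calc P*P ≤ 1*1 := mul_le_mul h h hP0.le zero_le_one
        _ = 1 := by ring
      rw [max_eq_right h2, max_eq_right h, one_pow]
    · have h2 : (1:ℝ) ≤ P^2 := by
        rw [pow_two]
        calc (1:ℝ) = 1*1 := by ring
        _ ≤ P*P := mul_le_mul h h zero_le_one (by linarith)
      rw [max_eq_left h2, max_eq_left h]
  rw [hM2]
  constructor
  · -- μ₊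
    have h1 : s ≤ B + u := by linarith
    have hsq : s^2 ≤ (B+u)^2 := pow_le_pow_left₀ hs0.le h1 2
    have hCle := mul_le_mul_of_nonneg_right
      (min_le_left (q^10*cq) (a^2)) (sq_nonneg M)
    have he : ((B+u)/2)^2 = (B+u)^2/4 := by ring
    linarith
  · -- μ₋
    have hμeq : ((B - u)/2)^2 = ((u - B)/2)^2 := by ring
    rw [hμeq]
    set t := min s (a*M) with htdef
    clear_value t
    have ht0 : 0 < t := by rw [htdef]; exact lt_min hs0 (by positivity)
    have hts : t ≤ s := by rw [htdef]; exact min_le_left _ _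
    have hta : t ≤ a*M := by rw [htdef]; exact min_le_right _ _
    have htu : t ≤ u - B := by
      rcases le_or_gt B 0 with hB | hB
      · have h1 : s ≤ u - B := by linarith
        linarith [hts]
      · have huub : u ≤ B + 2*s := by
          have h := Real.sqrt_le_sqrt
            (show B^2 + 4*s^2 ≤ (B+2*s)^2 by linarith [mul_pos hB hs0])
          rw [Real.sqrt_sq (by linarith)] at h
          rw [hudef]; exact h
        rcases le_or_gt B s with hBs | hBs
        · have h1 : s ≤ u - B := by linarith
          linarith [hts]
        · have hub0 : 0 ≤ u - B := by
            have h := Real.sqrt_le_sqrt (show B^2 ≤ B^2 + 4*s^2 by linarith [sq_nonneg s])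
            rw [Real.sqrt_sq_eq_abs, ← hudef] at h
            have := le_abs_self B
            linarith
          have h4 : (u - B)*(u + B) = 4*s^2 := by linear_combination hu2
          have h5 : u + B ≤ 4*B := by linarith
          have h6 : 4*s^2 ≤ (u-B)*(4*B) := by
            calc 4*s^2 = (u-B)*(u+B) := h4.symm
            _ ≤ (u-B)*(4*B) := mul_le_mul_of_nonneg_left h5 hub0
          have hab : a*b*M^2 = q^10*cq*M^2 := by
            rw [hadef]; field_simp
          have hint1 : a*M*B ≤ a*M*(b*M) :=
            mul_le_mul_of_nonneg_left hBub (mul_pos ha hM0).le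
          have h7 : a*M*B ≤ (u-B)*B := by linarith [h6, hslb, hab, hint1]
          have h8 : a*M ≤ u - B := le_of_mul_le_mul_right (by linarith) hB
          linarith [hta]
    have hsq : t^2 ≤ (u-B)^2 := pow_le_pow_left₀ ht0.le htu 2
    have htlb : min (q^10*cq) (a^2) * M^2 ≤ t^2 := by
      rcases min_cases s (a*M) with ⟨he, _⟩ | ⟨he, _⟩ <;> rw [htdef, he]
      · have := mul_le_mul_of_nonneg_right
          (min_le_left (q^10*cq) (a^2)) (sq_nonneg M)
        linarith
      · have := mul_le_mul_of_nonneg_right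
          (min_le_right (q^10*cq) (a^2)) (sq_nonneg M)
        have he2 : (a*M)^2 = a^2*M^2 := by ring
        linarith
    have he3 : ((u-B)/2)^2 = (u-B)^2/4 := by ring
    linarith
end
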